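/- arXiv:0901.4872 — 11 statements merged into one kernel-verified Lean document; each statement's English description precedes it below -/
import Mathlib

section
/- Let V be a complex vector space with an s.i.p. [·,·] and associated norm ‖x‖ = √([x,x]). Then the following are equivalent: (i) V is a differentiable s.i.p. space, i.e. for all x, z ∈ V and all y ≠ 0 the limit [x,·]'_z(y) := lim_{λ→0, λ real} (Re[x, y+λz] − Re[x, y])/λ exists; (ii) the norm is twice Gâteaux differentiable, i.e. for all x, z ∈ V and all y ≠ 0 the limits ‖·‖'_x(y) := lim_{λ→0} (‖y+λx‖ − ‖y‖)/λ and ‖·‖''_{x,z}(y) := lim_{λ→0} (‖·‖'_x(y+λz) − ‖·‖'_x(y))/λ exist. Moreover, the limit in (i) is continuous as a function of y if and only if the second Gâteaux derivative in (ii) is continuous as a function of y. -/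
/-!
The inequality `t Re[x,y] ≤ ‖y‖ (‖y + t x‖ - ‖y‖)` (Cauchy–Schwarz applied to `[y + t x, y]`)
says that for `y ≠ 0`, `Re[x,y] / ‖y‖` is a subgradient at `0` of the convex function
`t ↦ ‖y + t x‖`. Hence wherever the norm is Gâteaux differentiable, `Re[x,y] = ‖y‖ ‖·‖'_x(y)`;
conversely, continuity of `t ↦ Re[x, y + t x]`, which (i) provides, squeezes the difference
quotients of the norm and makes it differentiable. With `Re[x,·] = ‖·‖ ‖·‖'_x(·)` the product and
quotient rules turn (i) into (ii) and back, and give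
`[x,·]'_z(y) = ‖·‖'_z(y) ‖·‖'_x(y) + ‖y‖ ‖·‖''_{x,z}(y)`.
For continuity, `Re[x,·]` is squeezed between the difference quotients
`‖w‖ (‖w + t x‖ - ‖w‖) / t`, which are continuous in `w` and converge to it at `y`, so it is
continuous wherever the norm is Gâteaux differentiable; then so are the first derivatives
`Re[x,·] / ‖·‖`, and the two second derivatives differ by continuous terms.
-/

open Topology Filter

theorem hasDerivAt_of_subgradient {f ψ : ℝ → ℝ} {a : ℝ}
    (hsub : ∀ᶠ t in 𝓝 a, ∀ s, ψ t * (s - t) ≤ f s - f t) (hψ : ContinuousAt ψ a) :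
    HasDerivAt f (ψ a) a := by
  have hsmall : (fun t => (ψ t - ψ a) * (t - a)) =o[𝓝 a] fun t => t - a := by
    have h0 : Tendsto (fun t => ψ t - ψ a) (𝓝 a) (𝓝 0) := by
      simpa using hψ.tendsto.sub_const (ψ a)
    simpa using (Asymptotics.isLittleO_one_iff ℝ |>.2 h0).mul_isBigO
      (Asymptotics.isBigO_refl (fun t => t - a) (𝓝 a))
  refine hasDerivAt_iff_isLittleO.2 (Asymptotics.IsBigO.trans_isLittleO ?_ hsmall)
  refine Asymptotics.IsBigO.of_bound 1 ?_
  filter_upwards [hsub] with t ht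
  have hright := hsub.self_of_nhds t
  have hleft := ht a
  rw [one_mul, Real.norm_eq_abs, Real.norm_eq_abs, smul_eq_mul]
  apply abs_le_abs <;> linarith

theorem upperSemicontinuousAt_of_le_of_tendsto {X ι : Type*} [TopologicalSpace X]
    {F : X → ℝ} {y : X} {u : ι → X → ℝ} {l : Filter ι} [l.NeBot]
    (hu : ∀ i, ContinuousAt (u i) y) (hle : ∀ᶠ i in l, ∀ w, F w ≤ u i w)
    (hlim : Tendsto (fun i => u i y) l (𝓝 (F y))) : UpperSemicontinuousAt F y := by
  intro c hc
  obtain ⟨i, hic, hiF⟩ := ((hlim.eventually (gt_mem_nhds hc)).and hle).exists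
  filter_upwards [(hu i).eventually (gt_mem_nhds hic)] with w hw
  exact (hiF w).trans_lt hw

section NormSemiInnerProduct

variable {E : Type*} [NormedAddCommGroup E] [NormedSpace ℝ E]

/-- The real part `Re [x, y]` of a semi-inner product inducing the norm of `E`. -/
structure IsNormSemiInnerProduct (g : E → E → ℝ) : Prop where
  add_left : ∀ x x' y, g (x + x') y = g x y + g x' y
  smul_left : ∀ (r : ℝ) x y, g (r • x) y = r * g x y
  self_eq : ∀ y, g y y = ‖y‖ ^ 2
  le_norm_mul_norm : ∀ x y, g x y ≤ ‖x‖ * ‖y‖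

namespace IsNormSemiInnerProduct

variable {g : E → E → ℝ} (hg : IsNormSemiInnerProduct g)
include hg

theorem neg_left (x y : E) : g (-x) y = -g x y := by
  rw [← neg_one_smul ℝ x, hg.smul_left, neg_one_mul]

theorem apply_zero_right (x : E) : g x 0 = 0 := by
  have h₁ := hg.le_norm_mul_norm x 0
  have h₂ := hg.le_norm_mul_norm (-x) 0
  rw [norm_zero, mul_zero] at h₁ h₂
  rw [hg.neg_left] at h₂
  linarith

theorem mul_le_norm_mul_sub (x y : E) (t : ℝ) :
    t * g x y ≤ ‖y‖ * (‖y + t • x‖ - ‖y‖) := by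
  have h := hg.le_norm_mul_norm (y + t • x) y
  rw [hg.add_left, hg.smul_left, hg.self_eq] at h
  linarith

theorem eq_norm_mul_of_hasLineDerivAt {x y : E} {M : ℝ}
    (h : HasLineDerivAt ℝ (‖·‖) M y x) : g x y = ‖y‖ * M := by
  have hmin : IsLocalMin (fun t : ℝ => ‖y‖ * ‖y + t • x‖ - t * g x y) 0 :=
    Eventually.of_forall fun t => by
      have := hg.mul_le_norm_mul_sub x y t
      simp only [zero_smul, add_zero, zero_mul, sub_zero]
      linarith
  have := hmin.hasDerivAt_eq_zero
    ((HasDerivAt.const_mul ‖y‖ h).sub (hasDerivAt_mul_const (g x y)))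
  linarith

theorem eq_norm_mul {x : E} {d : E → ℝ}
    (hd : ∀ w : E, w ≠ 0 → HasLineDerivAt ℝ (‖·‖) (d w) w x) (w : E) :
    g x w = ‖w‖ * d w := by
  rcases eq_or_ne w 0 with rfl | hw
  · rw [hg.apply_zero_right, norm_zero, zero_mul]
  · exact hg.eq_norm_mul_of_hasLineDerivAt (hd w hw)

theorem hasLineDerivAt_norm {x y : E} (hy : y ≠ 0)
    (hc : ContinuousAt (fun t : ℝ => g x (y + t • x)) 0) :
    HasLineDerivAt ℝ (‖·‖) (g x y / ‖y‖) y x := by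
  have hline : Continuous fun t : ℝ => y + t • x := by fun_prop
  have hne : ∀ᶠ t in 𝓝 (0 : ℝ), y + t • x ≠ 0 :=
    hline.continuousAt.eventually_ne (by simpa using hy)
  have hψ : ContinuousAt (fun t : ℝ => g x (y + t • x) / ‖y + t • x‖) 0 :=
    hc.div hline.norm.continuousAt (by simpa using hy)
  have hsub : ∀ᶠ t in 𝓝 (0 : ℝ), ∀ s, g x (y + t • x) / ‖y + t • x‖ * (s - t) ≤
      ‖y + s • x‖ - ‖y + t • x‖ := by
    filter_upwards [hne] with t ht s
    have h := hg.mul_le_norm_mul_sub x (y + t • x) (s - t)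
    rw [add_assoc, ← add_smul, add_sub_cancel] at h
    rw [div_mul_eq_mul_div, div_le_iff₀ (norm_pos_iff.2 ht)]
    linarith
  simpa [HasLineDerivAt] using hasDerivAt_of_subgradient hsub hψ

theorem upperSemicontinuousAt {x y : E} {M : ℝ} (h : HasLineDerivAt ℝ (‖·‖) M y x) :
    UpperSemicontinuousAt (g x) y := by
  refine upperSemicontinuousAt_of_le_of_tendsto (l := 𝓝[>] (0 : ℝ))
    (u := fun t w => ‖w‖ * ((‖w + t • x‖ - ‖w‖) / t)) (fun t => by fun_prop) ?_ ?_
  · filter_upwards [self_mem_nhdsWithin] with t (ht : 0 < t) w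
    rw [← mul_div_assoc, le_div_iff₀ ht]
    linarith [hg.mul_le_norm_mul_sub x w t]
  · rw [hg.eq_norm_mul_of_hasLineDerivAt h]
    simpa [div_eq_inv_mul] using h.tendsto_slope_zero_right.const_mul ‖y‖

theorem continuousAt {y : E} (h : ∀ x, ∃ M, HasLineDerivAt ℝ (‖·‖) M y x) (x : E) :
    ContinuousAt (g x) y := by
  obtain ⟨M, hM⟩ := h x
  obtain ⟨M', hM'⟩ := h (-x)
  refine continuousAt_iff_lower_upperSemicontinuousAt.2
    ⟨fun c hc => ?_, hg.upperSemicontinuousAt hM⟩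
  have hlt : g (-x) y < -c := by rw [hg.neg_left]; linarith
  filter_upwards [hg.upperSemicontinuousAt hM' (-c) hlt] with w hw
  rw [hg.neg_left] at hw
  linarith

theorem hasLineDerivAt_of_hasLineDerivAt_norm {D : E → E → ℝ}
    (hD : ∀ x y : E, y ≠ 0 → HasLineDerivAt ℝ (‖·‖) (D x y) y x) {x z y : E} {L : ℝ}
    (hL : HasLineDerivAt ℝ (D x) L y z) (hy : y ≠ 0) :
    HasLineDerivAt ℝ (g x) (D z y * D x y + ‖y‖ * L) y z := by
  rw [show g x = fun w => ‖w‖ * D x w from funext (hg.eq_norm_mul (hD x))]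
  have := HasDerivAt.mul (hD z y hy) hL
  simp only [zero_smul, add_zero] at this
  exact this

theorem lineDifferentiable_iff :
    (∀ x z y : E, y ≠ 0 → ∃ L, HasLineDerivAt ℝ (g x) L y z) ↔
      ∃ D : E → E → ℝ, (∀ x y : E, y ≠ 0 → HasLineDerivAt ℝ (‖·‖) (D x y) y x) ∧
        ∀ x z y : E, y ≠ 0 → ∃ L, HasLineDerivAt ℝ (D x) L y z := by
  constructor
  · intro hi
    have hD : ∀ x y : E, y ≠ 0 → HasLineDerivAt ℝ (‖·‖) (g x y / ‖y‖) y x := fun x y hy =>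
      hg.hasLineDerivAt_norm hy (hi x x y hy).choose_spec.continuousAt
    refine ⟨fun x w => g x w / ‖w‖, hD, fun x z y hy => ?_⟩
    obtain ⟨L, hL⟩ := hi x z y hy
    exact ⟨_, HasDerivAt.div hL (hD z y hy) (by simpa using hy)⟩
  · rintro ⟨D, hD, hD2⟩ x z y hy
    obtain ⟨L, hL⟩ := hD2 x z y hy
    exact ⟨_, hg.hasLineDerivAt_of_hasLineDerivAt_norm hD hL hy⟩

theorem continuousAt_iff {sD D2 : E → E → E → ℝ} {D : E → E → ℝ}
    (hsD : ∀ x z y : E, y ≠ 0 → HasLineDerivAt ℝ (g x) (sD x z y) y z)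
    (hD : ∀ x y : E, y ≠ 0 → HasLineDerivAt ℝ (‖·‖) (D x y) y x)
    (hD2 : ∀ x z y : E, y ≠ 0 → HasLineDerivAt ℝ (D x) (D2 x z y) y z) :
    (∀ x z y : E, y ≠ 0 → ContinuousAt (sD x z) y) ↔
      ∀ x z y : E, y ≠ 0 → ContinuousAt (D2 x z) y := by
  refine forall₃_congr fun x z y => forall_congr' fun hy => ?_
  have hform : sD x z =ᶠ[𝓝 y] fun w => D z w * D x w + ‖w‖ * D2 x z w :=
    (eventually_ne_nhds hy).mono fun w hw =>
      (hsD x z w hw).unique (hg.hasLineDerivAt_of_hasLineDerivAt_norm hD (hD2 x z w hw) hw)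
  have hDcont : ∀ v, ContinuousAt (D v) y := fun v => by
    refine ((hg.continuousAt (fun v => ⟨_, hD v y hy⟩) v).div continuous_norm.continuousAt
      (norm_ne_zero_iff.2 hy)).congr ((eventually_ne_nhds hy).mono fun w hw => ?_)
    show g v w / ‖w‖ = D v w
    rw [hg.eq_norm_mul (hD v) w, mul_div_cancel_left₀ _ (norm_ne_zero_iff.2 hw)]
  rw [continuousAt_congr hform]
  refine ⟨fun h => ?_, fun h =>
    ((hDcont z).mul (hDcont x)).add (continuous_norm.continuousAt.mul h)⟩
  refine ((h.sub ((hDcont z).mul (hDcont x))).div continuous_norm.continuousAt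
    (norm_ne_zero_iff.2 hy)).congr ((eventually_ne_nhds hy).mono fun w hw => ?_)
  show (D z w * D x w + ‖w‖ * D2 x z w - D z w * D x w) / ‖w‖ = D2 x z w
  rw [add_sub_cancel_left, mul_div_cancel_left₀ _ (norm_ne_zero_iff.2 hw)]

end IsNormSemiInnerProduct

end NormSemiInnerProduct

structure IsSemiInnerProduct {V : Type*} [AddCommGroup V] [Module ℂ V] (ip : V → V → ℂ) :
    Prop where
  add_left : ∀ x y z, ip (x + y) z = ip x z + ip y z
  smul_left : ∀ (c : ℂ) x y, ip (c • x) y = c * ip x y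
  re_self_pos : ∀ x, x ≠ 0 → 0 < (ip x x).re
  norm_sq_le : ∀ x y, ‖ip x y‖ ^ 2 ≤ (ip x x).re * (ip y y).re
  smul_right : ∀ (c : ℂ) x y, ip x (c • y) = starRingEnd ℂ c * ip x y

namespace IsSemiInnerProduct

variable {V : Type*} [AddCommGroup V] [Module ℂ V] {ip : V → V → ℂ}
  (hip : IsSemiInnerProduct ip)
include hip

theorem zero_left (y : V) : ip 0 y = 0 := by
  simpa using hip.smul_left 0 0 y

theorem re_self_nonneg (x : V) : 0 ≤ (ip x x).re := by
  rcases eq_or_ne x 0 with rfl | hx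
  · simp [hip.zero_left]
  · exact (hip.re_self_pos x hx).le

theorem re_le_sqrt_mul_sqrt (x y : V) :
    (ip x y).re ≤ √(ip x x).re * √(ip y y).re := by
  rw [← Real.sqrt_mul (hip.re_self_nonneg x)]
  calc (ip x y).re ≤ ‖ip x y‖ := Complex.re_le_norm _
    _ ≤ √((ip x x).re * (ip y y).re) :=
      (le_abs_self _).trans (Real.abs_le_sqrt (hip.norm_sq_le x y))

theorem sqrt_re_smul (r : ℝ) (x : V) :
    √(ip ((r : ℂ) • x) ((r : ℂ) • x)).re = |r| * √(ip x x).re := by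
  rw [hip.smul_left, hip.smul_right, Complex.conj_ofReal, ← mul_assoc, ← Complex.ofReal_mul,
    Complex.re_ofReal_mul, Real.sqrt_mul (mul_self_nonneg r), Real.sqrt_mul_self_eq_abs]

theorem sqrt_re_add_le (a b : V) :
    √(ip (a + b) (a + b)).re ≤ √(ip a a).re + √(ip b b).re := by
  set n := √(ip (a + b) (a + b)).re
  have hsq : n * n ≤ (√(ip a a).re + √(ip b b).re) * n := by
    rw [Real.mul_self_sqrt (hip.re_self_nonneg _), hip.add_left, Complex.add_re, add_mul]
    exact add_le_add (hip.re_le_sqrt_mul_sqrt a _) (hip.re_le_sqrt_mul_sqrt b _)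
  nlinarith [Real.sqrt_nonneg (ip (a + b) (a + b)).re, Real.sqrt_nonneg (ip a a).re,
    Real.sqrt_nonneg (ip b b).re]

noncomputable abbrev normedAddCommGroup : NormedAddCommGroup V :=
  letI : Norm V := ⟨fun x => √(ip x x).re⟩
  NormedAddCommGroup.ofCore (𝕜 := ℝ)
    { norm_nonneg := fun _ => Real.sqrt_nonneg _
      norm_smul := fun r x => by
        rw [Real.norm_eq_abs]
        exact hip.sqrt_re_smul r x
      norm_triangle := hip.sqrt_re_add_le
      norm_eq_zero_iff := fun x => by
        refine ⟨fun hx => ?_, fun hx => ?_⟩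
        · by_contra hne
          exact (Real.sqrt_pos.2 (hip.re_self_pos x hne)).ne' hx
        · subst hx
          show √(ip 0 0).re = 0
          simp [hip.zero_left] }

noncomputable abbrev normedSpace : letI := hip.normedAddCommGroup; NormedSpace ℝ V :=
  letI := hip.normedAddCommGroup
  { norm_smul_le := fun r x => (hip.sqrt_re_smul r x).le }

theorem isNormSemiInnerProduct :
    letI := hip.normedAddCommGroup
    letI := hip.normedSpace
    IsNormSemiInnerProduct fun x y => (ip x y).re :=
  letI := hip.normedAddCommGroup
  letI := hip.normedSpace
  { add_left := fun x x' y => by simp only [hip.add_left, Complex.add_re]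
    smul_left := fun r x y => by
      rw [← Complex.coe_smul, hip.smul_left, Complex.re_ofReal_mul]
    self_eq := fun y => (Real.sq_sqrt (hip.re_self_nonneg y)).symm
    le_norm_mul_norm := hip.re_le_sqrt_mul_sqrt }

end IsSemiInnerProduct

/-- For a complex s.i.p. space `(V, ip)` with associated norm `nrm x = √(Re [x,x])`:
(i) differentiability of the s.i.p. (existence of `[x,·]'_z(y)` for all `x, z` and `y ≠ 0`)
is equivalent to (ii) the norm being twice Gâteaux differentiable; moreover, given the
derivative functions, the limit in (i) is continuous in `y` iff the second Gâteaux
derivative in (ii) is continuous in `y`. -/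
theorem stmt_0 {V : Type*} [AddCommGroup V] [Module ℂ V] (ip : V → V → ℂ)
    (nrm : V → ℝ) (hnrm : ∀ x, nrm x = Real.sqrt (ip x x).re)
    (h_add : ∀ x y z : V, ip (x + y) z = ip x z + ip y z)
    (h_sm1 : ∀ (c : ℂ) (x y : V), ip (c • x) y = c * ip x y)
    (h_pos : ∀ x : V, x ≠ 0 → 0 < (ip x x).re ∧ (ip x x).im = 0)
    (h_cs : ∀ x y : V, ‖ip x y‖ ^ 2 ≤ (ip x x).re * (ip y y).re)
    (h_sm2 : ∀ (c : ℂ) (x y : V), ip x (c • y) = (starRingEnd ℂ) c * ip x y) :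
    ((∀ x z y : V, y ≠ 0 → ∃ L : ℝ,
        Tendsto (fun lam : ℝ =>
          ((ip x (y + (lam : ℂ) • z)).re - (ip x y).re) / lam) (𝓝[≠] 0) (𝓝 L))
      ↔
      (∃ D : V → V → ℝ,
        (∀ x y : V, y ≠ 0 →
          Tendsto (fun lam : ℝ => (nrm (y + (lam : ℂ) • x) - nrm y) / lam)
            (𝓝[≠] 0) (𝓝 (D x y))) ∧
        (∀ x z y : V, y ≠ 0 → ∃ L2 : ℝ,
          Tendsto (fun lam : ℝ => (D x (y + (lam : ℂ) • z) - D x y) / lam)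
            (𝓝[≠] 0) (𝓝 L2))))
    ∧
    (∀ (sD : V → V → V → ℝ) (D : V → V → ℝ) (D2 : V → V → V → ℝ),
      (∀ x z y : V, y ≠ 0 →
        Tendsto (fun lam : ℝ =>
          ((ip x (y + (lam : ℂ) • z)).re - (ip x y).re) / lam) (𝓝[≠] 0)
          (𝓝 (sD x z y))) →
      (∀ x y : V, y ≠ 0 →
        Tendsto (fun lam : ℝ => (nrm (y + (lam : ℂ) • x) - nrm y) / lam)
          (𝓝[≠] 0) (𝓝 (D x y))) →
      (∀ x z y : V, y ≠ 0 →
        Tendsto (fun lam : ℝ => (D x (y + (lam : ℂ) • z) - D x y) / lam)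
          (𝓝[≠] 0) (𝓝 (D2 x z y))) →
      ((∀ x z y : V, y ≠ 0 → ∀ ε > (0 : ℝ), ∃ δ > (0 : ℝ), ∀ y' : V,
          nrm (y' - y) < δ → |sD x z y' - sD x z y| < ε)
        ↔
       (∀ x z y : V, y ≠ 0 → ∀ ε > (0 : ℝ), ∃ δ > (0 : ℝ), ∀ y' : V,
          nrm (y' - y) < δ → |D2 x z y' - D2 x z y| < ε))) := by
  obtain rfl : nrm = fun x => √(ip x x).re := funext hnrm
  have hip : IsSemiInnerProduct ip := ⟨h_add, h_sm1, fun x hx => (h_pos x hx).1, h_cs, h_sm2⟩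
  let := hip.normedAddCommGroup
  let := hip.normedSpace
  have hg := hip.isNormSemiInnerProduct
  have hdiff := hg.lineDifferentiable_iff
  have hcont := fun (sD : V → V → V → ℝ) D D2 =>
    hg.continuousAt_iff (sD := sD) (D := D) (D2 := D2)
  simp only [hasLineDerivAt_iff_tendsto_slope_zero, smul_eq_mul, ← div_eq_inv_mul,
    Metric.continuousAt_iff, dist_eq_norm] at hdiff hcont
  have hnorm : ∀ x, √(ip x x).re = ‖x‖ := fun _ => rfl
  simp only [Complex.coe_smul, hnorm]
  exact ⟨hdiff, hcont⟩
end

section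
/- Let V be a complex vector space with an s.i.p. [·,·] whose associated norm ‖x‖ = √([x,x]) is twice Gâteaux differentiable. Then for all x, z ∈ V and all y ≠ 0 the limit [x,·]'_z(y) := lim_{λ→0, λ real} (Re[x, y+λz] − Re[x, y])/λ exists and equals ‖y‖ · ‖·‖''_{x,z}(y) + Re[x,y] · Re[z,y] / ‖y‖². -/
open Topology Filter

/-!
By Cauchy–Schwarz, `t ↦ ‖y + t x‖` lies above the line `‖y‖ + t Re[x,y]/‖y‖`, which it
touches at `t = 0`; so its derivative there is the slope of that line:
`‖·‖'_x(y) = Re[x,y]/‖y‖`. Applied at every point `y + λz`, this writes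
`Re[x, y + λz] = ‖y + λz‖ · ‖·‖'_x(y + λz)`, and the product rule at `λ = 0` gives
`‖y‖ ‖·‖''_{x,z}(y) + ‖·‖'_z(y) ‖·‖'_x(y)`.
-/

theorem HasDerivAt.eq_of_forall_add_mul_le {f : ℝ → ℝ} {f' c a : ℝ} (hf : HasDerivAt f f' a)
    (h : ∀ t, f a + (t - a) * c ≤ f t) : f' = c := by
  have hmin : IsLocalMin (fun t => f t - (t - a) * c) a :=
    Eventually.of_forall fun t => by linarith [h t]
  have hderiv : HasDerivAt (fun t => f t - (t - a) * c) (f' - 1 * c) a :=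
    hf.sub (((hasDerivAt_id a).sub_const a).mul_const c)
  linarith [hmin.hasDerivAt_eq_zero hderiv]

theorem hasDerivAt_along_iff_tendsto_slope {V : Type*} [AddCommGroup V] [Module ℂ V]
    {F : V → ℝ} {x y : V} {L : ℝ} :
    HasDerivAt (fun t : ℝ => F (y + (t : ℂ) • x)) L 0 ↔
      Tendsto (fun t : ℝ => (F (y + (t : ℂ) • x) - F y) / t) (𝓝[≠] 0) (𝓝 L) := by
  rw [hasDerivAt_iff_tendsto_slope_zero]
  simp only [zero_add, Complex.ofReal_zero, zero_smul, add_zero, smul_eq_mul, div_eq_inv_mul]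

theorem nrm_pos {V : Type*} [Zero V] {ip : V → V → ℂ} {nrm : V → ℝ}
    (hnrm : ∀ x, nrm x = Real.sqrt (ip x x).re)
    (h_pos : ∀ x : V, x ≠ 0 → 0 < (ip x x).re) {y : V} (hy : y ≠ 0) :
    0 < nrm y := by
  rw [hnrm]
  exact Real.sqrt_pos.mpr (h_pos y hy)

section SemiInnerProduct

variable {V : Type*} [AddCommGroup V] [Module ℂ V] {ip : V → V → ℂ} {nrm : V → ℝ}

theorem ip_zero_left (h_sm1 : ∀ (c : ℂ) (x y : V), ip (c • x) y = c * ip x y) (y : V) :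
    ip 0 y = 0 := by
  simpa using h_sm1 0 0 y

theorem re_ip_self_nonneg (h_sm1 : ∀ (c : ℂ) (x y : V), ip (c • x) y = c * ip x y)
    (h_pos : ∀ x : V, x ≠ 0 → 0 < (ip x x).re) (w : V) :
    0 ≤ (ip w w).re := by
  rcases eq_or_ne w 0 with rfl | hw
  · simp [ip_zero_left h_sm1]
  · exact (h_pos w hw).le

theorem re_ip_le_nrm_mul_nrm (hnrm : ∀ x, nrm x = Real.sqrt (ip x x).re)
    (h_sm1 : ∀ (c : ℂ) (x y : V), ip (c • x) y = c * ip x y)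
    (h_pos : ∀ x : V, x ≠ 0 → 0 < (ip x x).re)
    (h_cs : ∀ x y : V, ‖ip x y‖ ^ 2 ≤ (ip x x).re * (ip y y).re) (w y : V) :
    (ip w y).re ≤ nrm w * nrm y := calc
  (ip w y).re ≤ ‖ip w y‖ := Complex.re_le_norm _
  _ = Real.sqrt (‖ip w y‖ ^ 2) := (Real.sqrt_sq (norm_nonneg _)).symm
  _ ≤ Real.sqrt ((ip w w).re * (ip y y).re) := Real.sqrt_le_sqrt (h_cs w y)
  _ = nrm w * nrm y := by rw [hnrm, hnrm, Real.sqrt_mul (re_ip_self_nonneg h_sm1 h_pos w)]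

theorem add_mul_re_ip_div_le_nrm (hnrm : ∀ x, nrm x = Real.sqrt (ip x x).re)
    (h_add : ∀ x y z : V, ip (x + y) z = ip x z + ip y z)
    (h_sm1 : ∀ (c : ℂ) (x y : V), ip (c • x) y = c * ip x y)
    (h_pos : ∀ x : V, x ≠ 0 → 0 < (ip x x).re)
    (h_cs : ∀ x y : V, ‖ip x y‖ ^ 2 ≤ (ip x x).re * (ip y y).re)
    {x y : V} (hy : y ≠ 0) (t : ℝ) :
    nrm y + t * ((ip x y).re / nrm y) ≤ nrm (y + (t : ℂ) • x) := by
  have hny := nrm_pos hnrm h_pos hy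
  have hsq : nrm y * nrm y = (ip y y).re := by
    rw [hnrm]; exact Real.mul_self_sqrt (re_ip_self_nonneg h_sm1 h_pos y)
  have hexpand : (ip (y + (t : ℂ) • x) y).re = (ip y y).re + t * (ip x y).re := by
    rw [h_add, h_sm1]
    simp
  have hcs := re_ip_le_nrm_mul_nrm hnrm h_sm1 h_pos h_cs (y + (t : ℂ) • x) y
  refine le_of_mul_le_mul_right ?_ hny
  calc (nrm y + t * ((ip x y).re / nrm y)) * nrm y = (ip y y).re + t * (ip x y).re := by
        field_simp; linarith
    _ ≤ nrm (y + (t : ℂ) • x) * nrm y := hexpand ▸ hcs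

theorem gateauxDeriv_nrm_eq (hnrm : ∀ x, nrm x = Real.sqrt (ip x x).re)
    (h_add : ∀ x y z : V, ip (x + y) z = ip x z + ip y z)
    (h_sm1 : ∀ (c : ℂ) (x y : V), ip (c • x) y = c * ip x y)
    (h_pos : ∀ x : V, x ≠ 0 → 0 < (ip x x).re)
    (h_cs : ∀ x y : V, ‖ip x y‖ ^ 2 ≤ (ip x x).re * (ip y y).re)
    {x y : V} (hy : y ≠ 0) {L : ℝ}
    (hL : HasDerivAt (fun t : ℝ => nrm (y + (t : ℂ) • x)) L 0) :
    L = (ip x y).re / nrm y :=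
  hL.eq_of_forall_add_mul_le fun t => by
    simpa using add_mul_re_ip_div_le_nrm hnrm h_add h_sm1 h_pos h_cs hy t

end SemiInnerProduct

theorem stmt_1_general {V : Type*} [AddCommGroup V] [Module ℂ V] (ip : V → V → ℂ)
    (nrm : V → ℝ) (hnrm : ∀ x, nrm x = Real.sqrt (ip x x).re)
    (h_add : ∀ x y z : V, ip (x + y) z = ip x z + ip y z)
    (h_sm1 : ∀ (c : ℂ) (x y : V), ip (c • x) y = c * ip x y)
    (h_pos : ∀ x : V, x ≠ 0 → 0 < (ip x x).re ∧ (ip x x).im = 0)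
    (h_cs : ∀ x y : V, ‖ip x y‖ ^ 2 ≤ (ip x x).re * (ip y y).re)
    (D : V → V → ℝ) (D2 : V → V → V → ℝ)
    (hD : ∀ x y : V, y ≠ 0 →
      Tendsto (fun lam : ℝ => (nrm (y + (lam : ℂ) • x) - nrm y) / lam)
        (𝓝[≠] 0) (𝓝 (D x y)))
    (hD2 : ∀ x z y : V, y ≠ 0 →
      Tendsto (fun lam : ℝ => (D x (y + (lam : ℂ) • z) - D x y) / lam)
        (𝓝[≠] 0) (𝓝 (D2 x z y))) :
    ∀ x z y : V, y ≠ 0 →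
      Tendsto (fun lam : ℝ =>
          ((ip x (y + (lam : ℂ) • z)).re - (ip x y).re) / lam) (𝓝[≠] 0)
        (𝓝 (nrm y * D2 x z y + (ip x y).re * (ip z y).re / nrm y ^ 2)) := by
  replace h_pos : ∀ x : V, x ≠ 0 → 0 < (ip x x).re := fun x hx => (h_pos x hx).1
  have hD_eq : ∀ x y : V, y ≠ 0 → D x y = (ip x y).re / nrm y := fun x y hy =>
    gateauxDeriv_nrm_eq hnrm h_add h_sm1 h_pos h_cs hy
      (hasDerivAt_along_iff_tendsto_slope.mpr (hD x y hy))
  intro x z y hy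
  have hny := nrm_pos hnrm h_pos hy
  have hN := hasDerivAt_along_iff_tendsto_slope.mpr (hD z y hy)
  have hP := hasDerivAt_along_iff_tendsto_slope.mpr (hD2 x z y hy)
  have hne : ∀ᶠ t : ℝ in 𝓝 0, y + (t : ℂ) • z ≠ 0 := by
    filter_upwards [hN.continuousAt.eventually (lt_mem_nhds (by simpa using hny))] with t ht h0
    rw [h0, hnrm, ip_zero_left h_sm1] at ht
    simp at ht
  have hprod : (fun t : ℝ => (ip x (y + (t : ℂ) • z)).re) =ᶠ[𝓝 0]
      fun t => nrm (y + (t : ℂ) • z) * D x (y + (t : ℂ) • z) := by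
    filter_upwards [hne] with t ht
    rw [hD_eq x _ ht, mul_div_cancel₀ _ (nrm_pos hnrm h_pos ht).ne']
  have hderiv : HasDerivAt (fun t : ℝ => (ip x (y + (t : ℂ) • z)).re)
      (nrm y * D2 x z y + (ip x y).re * (ip z y).re / nrm y ^ 2) 0 := by
    refine ((hN.mul hP).congr_of_eventuallyEq hprod).congr_deriv ?_
    simp only [Complex.ofReal_zero, zero_smul, add_zero, hD_eq x y hy, hD_eq z y hy]
    field_simp
    ring
  exact hasDerivAt_along_iff_tendsto_slope (F := fun v => (ip x v).re) |>.mp hderiv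

/-- If the norm of a complex s.i.p. space is twice Gâteaux differentiable, with first
derivative `D x y = ‖·‖'_x(y)` and second derivative `D2 x z y = ‖·‖''_{x,z}(y)`, then for
all `x, z` and `y ≠ 0` the s.i.p. derivative `[x,·]'_z(y)` exists and equals
`‖y‖·‖·‖''_{x,z}(y) + Re[x,y]·Re[z,y]/‖y‖²`. -/
theorem stmt_1 {V : Type*} [AddCommGroup V] [Module ℂ V] (ip : V → V → ℂ)
    (nrm : V → ℝ) (hnrm : ∀ x, nrm x = Real.sqrt (ip x x).re)
    (h_add : ∀ x y z : V, ip (x + y) z = ip x z + ip y z)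
    (h_sm1 : ∀ (c : ℂ) (x y : V), ip (c • x) y = c * ip x y)
    (h_pos : ∀ x : V, x ≠ 0 → 0 < (ip x x).re ∧ (ip x x).im = 0)
    (h_cs : ∀ x y : V, ‖ip x y‖ ^ 2 ≤ (ip x x).re * (ip y y).re)
    (h_sm2 : ∀ (c : ℂ) (x y : V), ip x (c • y) = (starRingEnd ℂ) c * ip x y)
    (D : V → V → ℝ) (D2 : V → V → V → ℝ)
    (hD : ∀ x y : V, y ≠ 0 →
      Tendsto (fun lam : ℝ => (nrm (y + (lam : ℂ) • x) - nrm y) / lam)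
        (𝓝[≠] 0) (𝓝 (D x y)))
    (hD2 : ∀ x z y : V, y ≠ 0 →
      Tendsto (fun lam : ℝ => (D x (y + (lam : ℂ) • z) - D x y) / lam)
        (𝓝[≠] 0) (𝓝 (D2 x z y))) :
    ∀ x z y : V, y ≠ 0 →
      Tendsto (fun lam : ℝ =>
          ((ip x (y + (lam : ℂ) • z)).re - (ip x y).re) / lam) (𝓝[≠] 0)
        (𝓝 (nrm y * D2 x z y + (ip x y).re * (ip z y).re / nrm y ^ 2)) :=
  stmt_1_general ip nrm hnrm h_add h_sm1 h_pos h_cs D D2 hD hD2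
end

section
/- Let G : ℝⁿ → ℝ be a C² function with G(λx) = λ²G(x) for all real λ and all x ∈ ℝⁿ, and let W ⊆ ℝⁿ be a linear subspace such that G(w) > 0 for all nonzero w ∈ W and such that the function w ↦ √(G(w)) is convex on W. Then for all x, y ∈ W with y ≠ 0 the associated product [x,y] := (1/2)·(Hessian of G at y applied to the pair (x, y)) satisfies the Cauchy–Schwarz inequality |[x,y]| ≤ √(G(x)·G(y)). -/
/-!
Since `√G` is convex and absolutely homogeneous of degree one on `W`, it is subadditive there, so
`t ↦ √G (y + t • x)` lies below `√G y + |t| √G x`. Comparing slopes at `t = 0` gives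
`|DG y x| ≤ 2 √G y √G x`. Differentiating the Euler relation `DG (c • y) = c • DG y` at `c = 1` and
using the symmetry of `D²G` identifies `D²G y x y` with `DG y x`.
-/

open Filter Topology

lemma le_of_hasDerivAt_of_le_add_mul {f : ℝ → ℝ} {d M : ℝ} (hf : HasDerivAt f d 0)
    (hbd : ∀ t > 0, f t ≤ f 0 + t * M) : d ≤ M := by
  have hslope : Tendsto (slope f 0) (𝓝[>] 0) (𝓝 d) :=
    (hasDerivAt_iff_tendsto_slope.1 hf).mono_left (nhdsWithin_mono _ fun t ht => ne_of_gt ht)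
  refine le_of_tendsto hslope ?_
  filter_upwards [self_mem_nhdsWithin] with t (ht : 0 < t)
  rw [slope_def_field, sub_zero, div_le_iff₀ ht]
  linarith [hbd t ht]

section SqHomogeneous

variable {E : Type*} [NormedAddCommGroup E] [NormedSpace ℝ E] {G : E → ℝ}

lemma sqrt_apply_smul_of_sq_homogeneous (hhom : ∀ (c : ℝ) (x : E), G (c • x) = c ^ 2 * G x)
    (c : ℝ) (x : E) : √(G (c • x)) = |c| * √(G x) := by
  rw [hhom, Real.sqrt_mul (sq_nonneg c), Real.sqrt_sq_eq_abs]

lemma sqrt_apply_add_le_of_convexOn (hhom : ∀ (c : ℝ) (x : E), G (c • x) = c ^ 2 * G x)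
    {W : Submodule ℝ E} (hconv : ConvexOn ℝ (W : Set E) fun w => √(G w))
    {x y : E} (hx : x ∈ W) (hy : y ∈ W) : √(G (x + y)) ≤ √(G x) + √(G y) := by
  have hmid : x + y = (2 : ℝ) • ((1 / 2 : ℝ) • x + (1 / 2 : ℝ) • y) := by module
  have h := hconv.2 hx hy (by norm_num : (0 : ℝ) ≤ 1 / 2) (by norm_num : (0 : ℝ) ≤ 1 / 2)
    (by norm_num)
  rw [hmid, sqrt_apply_smul_of_sq_homogeneous hhom, abs_two]
  simp only [smul_eq_mul] at h
  linarith

lemma fderiv_smul_of_sq_homogeneous (hhom : ∀ (c : ℝ) (x : E), G (c • x) = c ^ 2 * G x)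
    {z : E} (hz : DifferentiableAt ℝ G z) {c : ℝ} (hc : c ≠ 0) :
    fderiv ℝ G (c • z) = c • fderiv ℝ G z := by
  have h : c • fderiv ℝ G (c • z) = c ^ 2 • fderiv ℝ G z := by
    rw [← fderiv_comp_smul, ← fderiv_const_smul hz]
    simp only [hhom]
    rfl
  apply smul_right_injective _ hc
  simp only [h, smul_smul, sq]

lemma fderiv_fderiv_apply_self_of_sq_homogeneous
    (hhom : ∀ (c : ℝ) (x : E), G (c • x) = c ^ 2 * G x) (hG : Differentiable ℝ G) {y : E}
    (hG' : DifferentiableAt ℝ (fderiv ℝ G) y) : fderiv ℝ (fderiv ℝ G) y y = fderiv ℝ G y := by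
  have hline : HasDerivAt (fun c : ℝ => c • y) y 1 := by
    simpa using (hasDerivAt_id (1 : ℝ)).smul_const y
  have hcomp : HasDerivAt (fun c : ℝ => fderiv ℝ G (c • y)) (fderiv ℝ (fderiv ℝ G) y y) 1 := by
    refine HasFDerivAt.comp_hasDerivAt (l := fderiv ℝ G) 1 ?_ hline
    simpa using hG'.hasFDerivAt
  have heuler : (fun c : ℝ => fderiv ℝ G (c • y)) =ᶠ[𝓝 1] fun c => c • fderiv ℝ G y := by
    filter_upwards [isOpen_ne.mem_nhds one_ne_zero] with c hc
    exact fderiv_smul_of_sq_homogeneous hhom (hG y) hc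
  exact (hcomp.congr_of_eventuallyEq heuler.symm).unique
    (by simpa using (hasDerivAt_id (1 : ℝ)).smul_const (fderiv ℝ G y))

lemma fderiv_apply_le_two_mul_sqrt_mul_sqrt (hhom : ∀ (c : ℝ) (x : E), G (c • x) = c ^ 2 * G x)
    {W : Submodule ℝ E} (hconv : ConvexOn ℝ (W : Set E) fun w => √(G w))
    {x y : E} (hx : x ∈ W) (hy : y ∈ W) (hGy : 0 < G y) (hG : DifferentiableAt ℝ G y) :
    fderiv ℝ G y x ≤ 2 * √(G y) * √(G x) := by
  have hline : HasDerivAt (fun t : ℝ => y + t • x) x 0 := by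
    simpa using ((hasDerivAt_id (0 : ℝ)).smul_const x).const_add y
  have hderiv : HasDerivAt (fun t : ℝ => √(G (y + t • x))) (fderiv ℝ G y x / (2 * √(G y))) 0 := by
    have hG0 : HasDerivAt (fun t : ℝ => G (y + t • x)) (fderiv ℝ G y x) 0 :=
      HasFDerivAt.comp_hasDerivAt (l := G) 0 (by simpa using hG.hasFDerivAt) hline
    simpa using hG0.sqrt (by simpa using hGy.ne')
  have hbound : ∀ t > 0, √(G (y + t • x)) ≤ √(G (y + (0 : ℝ) • x)) + t * √(G x) := by
    intro t ht
    rw [zero_smul, add_zero]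
    have := sqrt_apply_add_le_of_convexOn hhom hconv hy (W.smul_mem t hx)
    rwa [sqrt_apply_smul_of_sq_homogeneous hhom, abs_of_pos ht] at this
  have := le_of_hasDerivAt_of_le_add_mul hderiv hbound
  rw [div_le_iff₀ (by positivity)] at this
  linarith

lemma abs_fderiv_apply_le_two_mul_sqrt_mul_sqrt (hhom : ∀ (c : ℝ) (x : E), G (c • x) = c ^ 2 * G x)
    {W : Submodule ℝ E} (hconv : ConvexOn ℝ (W : Set E) fun w => √(G w))
    {x y : E} (hx : x ∈ W) (hy : y ∈ W) (hGy : 0 < G y) (hG : DifferentiableAt ℝ G y) :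
    |fderiv ℝ G y x| ≤ 2 * √(G y) * √(G x) := by
  have hneg : G (-x) = G x := by simpa using hhom (-1) x
  have := fderiv_apply_le_two_mul_sqrt_mul_sqrt hhom hconv (W.neg_mem hx) hy hGy hG
  rw [map_neg, hneg] at this
  exact abs_le.2 ⟨by linarith, fderiv_apply_le_two_mul_sqrt_mul_sqrt hhom hconv hx hy hGy hG⟩

end SqHomogeneous

/-- Let `G : ℝⁿ → ℝ` be `C²` with `G(λx) = λ²G(x)`, and `W` a subspace on which `G` is
positive away from `0` and `√G` is convex. Then the associated product
`[x,y] = (1/2)·xᵀ(D²G|_y)y` satisfies Cauchy–Schwarz on `W`: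
`|[x,y]| ≤ √(G(x)·G(y))` for all `x, y ∈ W` with `y ≠ 0`. -/
theorem stmt_3 {n : ℕ} (G : (Fin n → ℝ) → ℝ)
    (hG : ContDiff ℝ 2 G)
    (hhom : ∀ (c : ℝ) (x : Fin n → ℝ), G (c • x) = c ^ 2 * G x)
    (W : Submodule ℝ (Fin n → ℝ))
    (hpos : ∀ w ∈ W, w ≠ 0 → 0 < G w)
    (hconv : ConvexOn ℝ (W : Set (Fin n → ℝ)) fun w => Real.sqrt (G w)) :
    ∀ x ∈ W, ∀ y ∈ W, y ≠ 0 →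
      |(1 / 2 : ℝ) * fderiv ℝ (fderiv ℝ G) y x y| ≤ Real.sqrt (G x * G y) := by
  intro x hx y hy hy0
  have hGx : 0 ≤ G x := by
    rcases eq_or_ne x 0 with rfl | hx0
    · exact (by simpa using hhom 0 0 : G 0 = 0).ge
    · exact (hpos x hx hx0).le
  have hdiff : Differentiable ℝ G := hG.differentiable two_ne_zero
  have hdiff' : Differentiable ℝ (fderiv ℝ G) :=
    (hG.fderiv_right (m := 1) (by norm_num)).differentiable one_ne_zero
  have hsymm : fderiv ℝ (fderiv ℝ G) y x y = fderiv ℝ (fderiv ℝ G) y y x :=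
    hG.contDiffAt.isSymmSndFDerivAt (by simp) x y
  have hbound := abs_fderiv_apply_le_two_mul_sqrt_mul_sqrt hhom hconv hx hy (hpos y hy hy0)
    (hdiff y)
  rw [hsymm, fderiv_fderiv_apply_self_of_sq_homogeneous hhom hdiff (hdiff' y), abs_mul,
    abs_of_pos one_half_pos, Real.sqrt_mul hGx]
  linarith
end

section
/- Let S be a real vector space with a real s.i.p. [·,·]_S, and let T be a real vector space with a map [·,·]_T : T × T → ℝ such that −[·,·]_T is a real s.i.p. on T. On V = S × T define the Minkowski product [(s₁,t₁),(s₂,t₂)]⁺ := [s₁,s₂]_S + [t₁,t₂]_T and the s.i.p. [(s₁,t₁),(s₂,t₂)]⁻ := [s₁,s₂]_S − [t₁,t₂]_T. If {e₁,…,e_k} is a basis of S with the Auerbach property for [·,·]_S and {e_{k+1},…,e_n} is a basis of T with the Auerbach property for [·,·]_T, then the union {e₁,…,e_n} is a basis of V having the Auerbach property with respect to both [·,·]⁺ and [·,·]⁻. -/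
/-!
The union family is the product basis `bS.prod bT`. A vector in the span of all its members
but `(bS i, 0)` has first component in the span of the `bS j` with `j ≠ i` and its pairing
with `(bS i, 0)` is `ipS w.1 (bS i) ± ipT w.2 0`, which vanishes by the Auerbach property of
`bS` and homogeneity of `ipT`; the members `(0, bT j)` are symmetric.
-/

namespace Module.Basis

variable {R ι κ M N : Type*} [Semiring R] [AddCommMonoid M] [Module R M]
  [AddCommMonoid N] [Module R N] (b : Basis ι R M) (b' : Basis κ R N)

theorem span_prod_image_ne_inl_le (i : ι) :
    Submodule.span R (b.prod b' '' {j | j ≠ .inl i}) ≤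
      (Submodule.span R (b '' {j | j ≠ i})).prod ⊤ := by
  rw [Submodule.span_le]
  rintro _ ⟨j | j, hj, rfl⟩
  · exact ⟨Submodule.subset_span ⟨j, fun h => hj (h ▸ rfl), by simp⟩, by simp⟩
  · simp

theorem span_prod_image_ne_inr_le (i : κ) :
    Submodule.span R (b.prod b' '' {j | j ≠ .inr i}) ≤
      (⊤ : Submodule R M).prod (Submodule.span R (b' '' {j | j ≠ i})) := by
  rw [Submodule.span_le]
  rintro _ ⟨j | j, hj, rfl⟩
  · simp
  · exact ⟨by simp, Submodule.subset_span ⟨j, fun h => hj (h ▸ rfl), by simp⟩⟩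

end Module.Basis

theorem apply_zero_right_of_smul_right {R M N : Type*} [Semiring R] [AddCommMonoid M]
    [Module R M] {ip : N → M → R} (h : ∀ (c : R) x y, ip x (c • y) = c * ip x y) (x : N) :
    ip x 0 = 0 := by
  simpa using h 0 x 0

theorem stmt_7_general {S T : Type*} [AddCommGroup S] [Module ℝ S] [AddCommGroup T] [Module ℝ T]
    (ipS : S → S → ℝ) (ipT : T → T → ℝ)
    (hS_sm2 : ∀ (c : ℝ) (x y : S), ipS x (c • y) = c * ipS x y)
    (hT_sm2 : ∀ (c : ℝ) (x y : T), -ipT x (c • y) = c * -ipT x y)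
    {k m : ℕ} (bS : Module.Basis (Fin k) ℝ S) (bT : Module.Basis (Fin m) ℝ T)
    (hAuerS : ∀ i : Fin k, ∀ w ∈ Submodule.span ℝ (⇑bS '' {j : Fin k | j ≠ i}),
      ipS w (bS i) = 0)
    (hAuerT : ∀ i : Fin m, ∀ w ∈ Submodule.span ℝ (⇑bT '' {j : Fin m | j ≠ i}),
      ipT w (bT i) = 0)
    (e : Fin k ⊕ Fin m → S × T)
    (he1 : ∀ i : Fin k, e (Sum.inl i) = (bS i, 0))
    (he2 : ∀ j : Fin m, e (Sum.inr j) = (0, bT j)) :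
    LinearIndependent ℝ e ∧
    Submodule.span ℝ (Set.range e) = ⊤ ∧
    (∀ i : Fin k ⊕ Fin m, ∀ w ∈ Submodule.span ℝ (e '' {j | j ≠ i}),
      ipS w.1 (e i).1 + ipT w.2 (e i).2 = 0 ∧
      ipS w.1 (e i).1 - ipT w.2 (e i).2 = 0) := by
  obtain rfl : e = bS.prod bT := by
    funext i
    rcases i with i | j
    · simp [he1]
    · simp [he2]
  refine ⟨(bS.prod bT).linearIndependent, (bS.prod bT).span_eq, ?_⟩
  have hipS0 : ∀ x, ipS x 0 = 0 := apply_zero_right_of_smul_right hS_sm2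
  have hipT0 : ∀ x, ipT x 0 = 0 := fun x =>
    neg_eq_zero.mp (apply_zero_right_of_smul_right (ip := fun x y => -ipT x y) hT_sm2 x)
  rintro (i | j) w hw
  · have hw1 := hAuerS i w.1 (bS.span_prod_image_ne_inl_le bT i hw).1
    simp [hw1, hipT0]
  · have hw2 := hAuerT j w.2 (bS.span_prod_image_ne_inr_le bT j hw).2
    simp [hw2, hipS0]

/-- Given a real s.i.p. space `(S, ipS)` and a space `T` with `-ipT` a real s.i.p., if
`bS` is an Auerbach basis of `S` for `ipS` and `bT` is an Auerbach basis of `T` for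
`ipT`, then the union family `e` in `V = S × T` is a basis of `V` having the Auerbach
property with respect to both the Minkowski product `[·,·]⁺` and the s.i.p. `[·,·]⁻`. -/
theorem stmt_7 {S T : Type*} [AddCommGroup S] [Module ℝ S] [AddCommGroup T] [Module ℝ T]
    (ipS : S → S → ℝ) (ipT : T → T → ℝ)
    (hS_add : ∀ x y z : S, ipS (x + y) z = ipS x z + ipS y z)
    (hS_sm1 : ∀ (c : ℝ) (x y : S), ipS (c • x) y = c * ipS x y)
    (hS_sm2 : ∀ (c : ℝ) (x y : S), ipS x (c • y) = c * ipS x y)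
    (hS_pos : ∀ x : S, x ≠ 0 → 0 < ipS x x)
    (hS_cs : ∀ x y : S, ipS x y ^ 2 ≤ ipS x x * ipS y y)
    (hT_add : ∀ x y z : T, -ipT (x + y) z = -ipT x z + -ipT y z)
    (hT_sm1 : ∀ (c : ℝ) (x y : T), -ipT (c • x) y = c * -ipT x y)
    (hT_sm2 : ∀ (c : ℝ) (x y : T), -ipT x (c • y) = c * -ipT x y)
    (hT_pos : ∀ x : T, x ≠ 0 → 0 < -ipT x x)
    (hT_cs : ∀ x y : T, (-ipT x y) ^ 2 ≤ -ipT x x * -ipT y y)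
    {k m : ℕ} (bS : Module.Basis (Fin k) ℝ S) (bT : Module.Basis (Fin m) ℝ T)
    (hAuerS : ∀ i : Fin k, ∀ w ∈ Submodule.span ℝ (⇑bS '' {j : Fin k | j ≠ i}),
      ipS w (bS i) = 0)
    (hAuerT : ∀ i : Fin m, ∀ w ∈ Submodule.span ℝ (⇑bT '' {j : Fin m | j ≠ i}),
      ipT w (bT i) = 0)
    (e : Fin k ⊕ Fin m → S × T)
    (he1 : ∀ i : Fin k, e (Sum.inl i) = (bS i, 0))
    (he2 : ∀ j : Fin m, e (Sum.inr j) = (0, bT j)) :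
    LinearIndependent ℝ e ∧
    Submodule.span ℝ (Set.range e) = ⊤ ∧
    (∀ i : Fin k ⊕ Fin m, ∀ w ∈ Submodule.span ℝ (e '' {j | j ≠ i}),
      ipS w.1 (e i).1 + ipT w.2 (e i).2 = 0 ∧
      ipS w.1 (e i).1 - ipT w.2 (e i).2 = 0) :=
  stmt_7_general ipS ipT hS_sm2 hT_sm2 bS bT hAuerS hAuerT e he1 he2
end

section
/- Let S be a real vector space with a real s.i.p. [·,·], let V = S × ℝ carry the Minkowski product [(s₁,t₁),(s₂,t₂)]⁺ := [s₁,s₂] − t₁t₂, and let v = (s,t) ∈ V satisfy [v,v]⁺ = −1. Then every nonzero vector w ∈ V that is orthogonal to v, i.e. [w,v]⁺ = 0, satisfies [w,w]⁺ > 0. In other words, the orthogonal companion v^⊥ = {w ∈ V : [w,v]⁺ = 0} is a positive subspace of V. -/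
/-! For `w ⊥ v` the Cauchy–Schwarz inequality for `(w.1, v.1)`, together with
`v.2 ^ 2 = [v.1, v.1] + 1`, gives `w.2 ^ 2 ≤ [w, w]⁺ · [v.1, v.1]`. Since `[v.1, v.1] ≥ 0`, a
nonzero time component `w.2` forces `[w, w]⁺ > 0`; if `w.2 = 0`, then `[w, w]⁺ = [w.1, w.1] > 0`. -/

section

variable {S : Type*} (ip : S → S → ℝ)

theorem ip_zero_left_s9 [AddZeroClass S] (h_add : ∀ x y z : S, ip (x + y) z = ip x z + ip y z)
    (y : S) : ip 0 y = 0 := by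
  have := h_add 0 0 y
  rw [add_zero] at this
  linarith

theorem ip_self_nonneg [AddZeroClass S] (h_add : ∀ x y z : S, ip (x + y) z = ip x z + ip y z)
    (h_pos : ∀ x : S, x ≠ 0 → 0 < ip x x) (x : S) : 0 ≤ ip x x := by
  rcases eq_or_ne x 0 with rfl | hx
  · exact (ip_zero_left_s9 ip h_add 0).ge
  · exact (h_pos x hx).le

theorem sq_snd_le_mul_of_orthogonal (h_cs : ∀ x y : S, ip x y ^ 2 ≤ ip x x * ip y y)
    {v w : S × ℝ} (hv : ip v.1 v.1 - v.2 ^ 2 = -1) (hwv : ip w.1 v.1 - w.2 * v.2 = 0) :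
    w.2 ^ 2 ≤ (ip w.1 w.1 - w.2 ^ 2) * ip v.1 v.1 := by
  have hcs := h_cs w.1 v.1
  rw [show ip w.1 v.1 = w.2 * v.2 by linarith, mul_pow,
    show v.2 ^ 2 = ip v.1 v.1 + 1 by linarith] at hcs
  linarith

end

theorem stmt_9_general {S : Type*} [AddCommGroup S]
    (ip : S → S → ℝ)
    (h_add : ∀ x y z : S, ip (x + y) z = ip x z + ip y z)
    (h_pos : ∀ x : S, x ≠ 0 → 0 < ip x x)
    (h_cs : ∀ x y : S, ip x y ^ 2 ≤ ip x x * ip y y)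
    (v : S × ℝ) (hv : ip v.1 v.1 - v.2 ^ 2 = -1) :
    ∀ w : S × ℝ, w ≠ 0 → ip w.1 v.1 - w.2 * v.2 = 0 →
      0 < ip w.1 w.1 - w.2 ^ 2 := by
  intro w hw hwv
  rcases eq_or_ne w.2 0 with ht | ht
  · have hs : w.1 ≠ 0 := fun hs => hw (Prod.ext hs ht)
    simpa [ht] using h_pos w.1 hs
  · have hprod : 0 < (ip w.1 w.1 - w.2 ^ 2) * ip v.1 v.1 :=
      (sq_pos_of_ne_zero ht).trans_le (sq_snd_le_mul_of_orthogonal ip h_cs hv hwv)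
    exact pos_of_mul_pos_left hprod (ip_self_nonneg ip h_add h_pos v.1)

/-- In the generalized space-time model `V = S × ℝ` with Minkowski product
`[(s₁,t₁),(s₂,t₂)]⁺ = [s₁,s₂] - t₁t₂`, if `v` lies on the imaginary unit sphere
(`[v,v]⁺ = -1`) then every nonzero `w` orthogonal to `v` satisfies `[w,w]⁺ > 0`; i.e. the
orthogonal companion of `v` is a positive subspace. -/
theorem stmt_9 {S : Type*} [AddCommGroup S] [Module ℝ S]
    (ip : S → S → ℝ)
    (h_add : ∀ x y z : S, ip (x + y) z = ip x z + ip y z)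
    (h_sm1 : ∀ (c : ℝ) (x y : S), ip (c • x) y = c * ip x y)
    (h_sm2 : ∀ (c : ℝ) (x y : S), ip x (c • y) = c * ip x y)
    (h_pos : ∀ x : S, x ≠ 0 → 0 < ip x x)
    (h_cs : ∀ x y : S, ip x y ^ 2 ≤ ip x x * ip y y)
    (v : S × ℝ) (hv : ip v.1 v.1 - v.2 ^ 2 = -1) :
    ∀ w : S × ℝ, w ≠ 0 → ip w.1 v.1 - w.2 * v.2 = 0 →
      0 < ip w.1 w.1 - w.2 ^ 2 :=
  stmt_9_general ip h_add h_pos h_cs v hv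
end

section
/- Let S be a real vector space with a real s.i.p. [·,·] that is continuous in the sense that for all e, s ∈ S the map λ ↦ [e, s + λe] (λ real) is continuous at λ = 0 with limit [e,s]. Then for every s ∈ S and every e ∈ S, the function f : S → ℝ, f(s) = √(1 + [s,s]), has directional derivative f'_e(s) := lim_{λ→0} (f(s + λe) − f(s))/λ = [e,s] / √(1 + [s,s]). -/
/-!
Write `f x = √(1 + [x, x])` and `x = s + λe`. The Cauchy–Schwarz inequality for `[·,·]` upgrades to
`[x, y] + 1 ≤ f x * f y`; applied to `(x, s)` and to `(s, x)` (expanding by additivity in the first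
argument only) it traps the difference quotient `(f x - f s) / λ` between `[e, s] / f s` and
`[e, x] / f x`. Both bounds are at most `√[e, e]` in absolute value, so `f` is Lipschitz along the
line and `f x → f s`; continuity of the s.i.p. then sends the second bound to the first.
-/

open Topology Filter

lemma div_mem_uIcc_of_mul_sub_le {t n₀ n p₀ p : ℝ} (hn₀ : 0 < n₀) (hn : 0 < n) (ht : t ≠ 0)
    (h₀ : t * p₀ ≤ n₀ * (n - n₀)) (h₁ : n * (n - n₀) ≤ t * p) :
    (n - n₀) / t ∈ Set.uIcc (p₀ / n₀) (p / n) := by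
  rcases ht.lt_or_gt with ht | ht
  · refine Set.Icc_subset_uIcc' ⟨?_, ?_⟩
    · rw [le_div_iff_of_neg ht, div_mul_eq_mul_div, le_div_iff₀ hn]
      linarith
    · rw [div_le_iff_of_neg ht, div_mul_eq_mul_div, div_le_iff₀ hn₀]
      linarith
  · refine Set.Icc_subset_uIcc ⟨?_, ?_⟩
    · rw [div_le_div_iff₀ hn₀ ht]
      linarith
    · rw [div_le_div_iff₀ ht hn]
      linarith

section SemiInnerProduct

variable {S : Type*} {ip : S → S → ℝ}

variable (ip) in
/-- The paper's `f`: the time coordinate of the point of the upper sheet of `H` over `x`. -/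
noncomputable def sheetHeight (x : S) : ℝ := √(1 + ip x x)

lemma sheetHeight_sq (h_nonneg : ∀ x : S, 0 ≤ ip x x) (x : S) :
    sheetHeight ip x ^ 2 = 1 + ip x x :=
  Real.sq_sqrt (by linarith [h_nonneg x])

lemma one_le_sheetHeight (h_nonneg : ∀ x : S, 0 ≤ ip x x) (x : S) : 1 ≤ sheetHeight ip x :=
  Real.one_le_sqrt.mpr (by linarith [h_nonneg x])

lemma sheetHeight_pos (h_nonneg : ∀ x : S, 0 ≤ ip x x) (x : S) : 0 < sheetHeight ip x :=
  zero_lt_one.trans_le (one_le_sheetHeight h_nonneg x)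

lemma sip_add_one_le_sheetHeight_mul (h_nonneg : ∀ x : S, 0 ≤ ip x x)
    (h_cs : ∀ x y : S, ip x y ^ 2 ≤ ip x x * ip y y) (x y : S) :
    ip x y + 1 ≤ sheetHeight ip x * sheetHeight ip y := by
  refine le_of_sq_le_sq ?_ (mul_nonneg (Real.sqrt_nonneg _) (Real.sqrt_nonneg _))
  rw [mul_pow, sheetHeight_sq h_nonneg, sheetHeight_sq h_nonneg]
  -- `2 [x, y] ≤ 2 √([x, x] [y, y]) ≤ [x, x] + [y, y]`
  nlinarith [h_cs x y, h_nonneg x, h_nonneg y, sq_nonneg (ip x x - ip y y),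
    sq_nonneg (ip x x + ip y y - 2 * ip x y)]

lemma abs_sip_div_sheetHeight_le (h_nonneg : ∀ x : S, 0 ≤ ip x x)
    (h_cs : ∀ x y : S, ip x y ^ 2 ≤ ip x x * ip y y) (e x : S) :
    |ip e x / sheetHeight ip x| ≤ √(ip e e) := by
  rw [abs_div, abs_of_pos (sheetHeight_pos h_nonneg x), div_le_iff₀ (sheetHeight_pos h_nonneg x)]
  refine abs_le_of_sq_le_sq ?_ (mul_nonneg (Real.sqrt_nonneg _) (Real.sqrt_nonneg _))
  rw [mul_pow, Real.sq_sqrt (h_nonneg e), sheetHeight_sq h_nonneg]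
  nlinarith [h_cs e x, h_nonneg e]

variable [AddCommGroup S] [Module ℝ S]

lemma sip_self_nonneg (h_sm1 : ∀ (c : ℝ) (x y : S), ip (c • x) y = c * ip x y)
    (h_pos : ∀ x : S, x ≠ 0 → 0 < ip x x) (x : S) : 0 ≤ ip x x := by
  rcases eq_or_ne x 0 with rfl | hx
  · simpa using (h_sm1 0 0 0).ge
  · exact (h_pos x hx).le

lemma sheetHeight_slope_mem_uIcc (h_add : ∀ x y z : S, ip (x + y) z = ip x z + ip y z)
    (h_sm1 : ∀ (c : ℝ) (x y : S), ip (c • x) y = c * ip x y) (h_nonneg : ∀ x : S, 0 ≤ ip x x)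
    (h_cs : ∀ x y : S, ip x y ^ 2 ≤ ip x x * ip y y) (s e : S) {t : ℝ} (ht : t ≠ 0) :
    (sheetHeight ip (s + t • e) - sheetHeight ip s) / t ∈
      Set.uIcc (ip e s / sheetHeight ip s) (ip e (s + t • e) / sheetHeight ip (s + t • e)) := by
  have hx := sip_add_one_le_sheetHeight_mul h_nonneg h_cs (s + t • e) s
  have hs := sip_add_one_le_sheetHeight_mul h_nonneg h_cs s (s + t • e)
  rw [h_add, h_sm1] at hx
  have hxx : ip (s + t • e) (s + t • e) = ip s (s + t • e) + t * ip e (s + t • e) := by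
    rw [h_add, h_sm1]
  refine div_mem_uIcc_of_mul_sub_le (sheetHeight_pos h_nonneg s)
    (sheetHeight_pos h_nonneg _) ht ?_ ?_
  · nlinarith [sheetHeight_sq h_nonneg s]
  · nlinarith [sheetHeight_sq h_nonneg (s + t • e)]

lemma abs_sheetHeight_sub_le (h_add : ∀ x y z : S, ip (x + y) z = ip x z + ip y z)
    (h_sm1 : ∀ (c : ℝ) (x y : S), ip (c • x) y = c * ip x y) (h_nonneg : ∀ x : S, 0 ≤ ip x x)
    (h_cs : ∀ x y : S, ip x y ^ 2 ≤ ip x x * ip y y) (s e : S) (t : ℝ) :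
    |sheetHeight ip (s + t • e) - sheetHeight ip s| ≤ √(ip e e) * |t| := by
  rcases eq_or_ne t 0 with rfl | ht
  · simp
  have hbound : ∀ x, ip e x / sheetHeight ip x ∈ Set.Icc (-√(ip e e)) √(ip e e) := fun x =>
    abs_le.mp (abs_sip_div_sheetHeight_le h_nonneg h_cs e x)
  have hslope := abs_le.mpr <| Set.uIcc_subset_Icc (hbound s) (hbound (s + t • e))
    (sheetHeight_slope_mem_uIcc h_add h_sm1 h_nonneg h_cs s e ht)
  rwa [abs_div, div_le_iff₀ (abs_pos.mpr ht)] at hslope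

lemma tendsto_sheetHeight_add_smul (h_add : ∀ x y z : S, ip (x + y) z = ip x z + ip y z)
    (h_sm1 : ∀ (c : ℝ) (x y : S), ip (c • x) y = c * ip x y) (h_nonneg : ∀ x : S, 0 ≤ ip x x)
    (h_cs : ∀ x y : S, ip x y ^ 2 ≤ ip x x * ip y y) (s e : S) :
    Tendsto (fun t : ℝ => sheetHeight ip (s + t • e)) (𝓝 0) (𝓝 (sheetHeight ip s)) := by
  rw [tendsto_iff_norm_sub_tendsto_zero]
  refine squeeze_zero (fun _ => norm_nonneg _)
    (fun t => abs_sheetHeight_sub_le h_add h_sm1 h_nonneg h_cs s e t) ?_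
  simpa using (continuous_abs.tendsto (0 : ℝ)).const_mul √(ip e e)

theorem tendsto_sheetHeight_slope (h_add : ∀ x y z : S, ip (x + y) z = ip x z + ip y z)
    (h_sm1 : ∀ (c : ℝ) (x y : S), ip (c • x) y = c * ip x y) (h_nonneg : ∀ x : S, 0 ≤ ip x x)
    (h_cs : ∀ x y : S, ip x y ^ 2 ≤ ip x x * ip y y) (s e : S)
    (h_cont : Tendsto (fun t : ℝ => ip e (s + t • e)) (𝓝 0) (𝓝 (ip e s))) :
    Tendsto (fun t : ℝ => (sheetHeight ip (s + t • e) - sheetHeight ip s) / t) (𝓝[≠] 0)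
      (𝓝 (ip e s / sheetHeight ip s)) := by
  have hupper : Tendsto (fun t : ℝ => ip e (s + t • e) / sheetHeight ip (s + t • e)) (𝓝[≠] 0)
      (𝓝 (ip e s / sheetHeight ip s)) :=
    (h_cont.div (tendsto_sheetHeight_add_smul h_add h_sm1 h_nonneg h_cs s e)
      (sheetHeight_pos h_nonneg s).ne').mono_left nhdsWithin_le_nhds
  rw [tendsto_iff_norm_sub_tendsto_zero] at hupper ⊢
  refine squeeze_zero_norm' ?_ hupper
  filter_upwards [self_mem_nhdsWithin] with t ht
  simpa only [Real.norm_eq_abs, abs_abs] using Set.abs_sub_left_of_mem_uIcc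
    (sheetHeight_slope_mem_uIcc h_add h_sm1 h_nonneg h_cs s e ht)

end SemiInnerProduct

theorem stmt_10_general {S : Type*} [AddCommGroup S] [Module ℝ S]
    (ip : S → S → ℝ)
    (h_add : ∀ x y z : S, ip (x + y) z = ip x z + ip y z)
    (h_sm1 : ∀ (c : ℝ) (x y : S), ip (c • x) y = c * ip x y)
    (h_pos : ∀ x : S, x ≠ 0 → 0 < ip x x)
    (h_cs : ∀ x y : S, ip x y ^ 2 ≤ ip x x * ip y y)
    (h_cont : ∀ e s : S,
      Tendsto (fun lam : ℝ => ip e (s + lam • e)) (𝓝 0) (𝓝 (ip e s))) :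
    ∀ s e : S,
      Tendsto (fun lam : ℝ =>
          (Real.sqrt (1 + ip (s + lam • e) (s + lam • e)) - Real.sqrt (1 + ip s s)) / lam)
        (𝓝[≠] 0) (𝓝 (ip e s / Real.sqrt (1 + ip s s))) := fun s e =>
  tendsto_sheetHeight_slope h_add h_sm1 (sip_self_nonneg h_sm1 h_pos) h_cs s e (h_cont e s)

/-- If the real s.i.p. on `S` is continuous (for all `e, s` the map `λ ↦ [e, s + λe]`
tends to `[e,s]` as `λ → 0`), then the function `f(s) = √(1 + [s,s])` has directional
derivative `f'_e(s) = [e,s]/√(1 + [s,s])` at every `s` in every direction `e`. -/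
theorem stmt_10 {S : Type*} [AddCommGroup S] [Module ℝ S]
    (ip : S → S → ℝ)
    (h_add : ∀ x y z : S, ip (x + y) z = ip x z + ip y z)
    (h_sm1 : ∀ (c : ℝ) (x y : S), ip (c • x) y = c * ip x y)
    (h_sm2 : ∀ (c : ℝ) (x y : S), ip x (c • y) = c * ip x y)
    (h_pos : ∀ x : S, x ≠ 0 → 0 < ip x x)
    (h_cs : ∀ x y : S, ip x y ^ 2 ≤ ip x x * ip y y)
    (h_cont : ∀ e s : S,
      Tendsto (fun lam : ℝ => ip e (s + lam • e)) (𝓝 0) (𝓝 (ip e s))) :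
    ∀ s e : S,
      Tendsto (fun lam : ℝ =>
          (Real.sqrt (1 + ip (s + lam • e) (s + lam • e)) - Real.sqrt (1 + ip s s)) / lam)
        (𝓝[≠] 0) (𝓝 (ip e s / Real.sqrt (1 + ip s s))) :=
  stmt_10_general ip h_add h_sm1 h_pos h_cs h_cont
end

section
/- Let S be a strictly convex real normed space. Then the real normed space V = S × ℝ with norm ‖(s,t)‖ := √(‖s‖² + t²) is strictly convex; that is, whenever ‖v + w‖ = ‖v‖ + ‖w‖ for nonzero v, w ∈ V, there is a real μ > 0 with w = μv. -/
/-!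
Send `(s, t)` to the point `(‖s‖, t)` of the Euclidean plane `ℂ`, whose modulus is the given norm
`N (s, t)`. The triangle inequality in `S` and then in `ℂ` give
`N (v + w) ≤ |(‖s₁‖ + ‖s₂‖, t₁ + t₂)| ≤ N v + N w`, so equality `N (v + w) = N v + N w` forces
both `‖s₁ + s₂‖ = ‖s₁‖ + ‖s₂‖` and `(‖s₂‖, t₂) = μ (‖s₁‖, t₁)` for some `μ > 0`, the plane being
strictly convex. Strict convexity of `S` then yields `s₂ = μ • s₁` with the same `μ`, since it
is pinned down by `‖s₂‖ = μ ‖s₁‖`.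
-/

namespace ProdSqrtNorm

lemma norm_mk (a b : ℝ) : ‖(⟨a, b⟩ : ℂ)‖ = √(a ^ 2 + b ^ 2) := by
  simp only [Complex.norm_def, Complex.normSq_apply, sq]

variable {S : Type*} [NormedAddCommGroup S]

def profile (p : S × ℝ) : ℂ := ⟨‖p.1‖, p.2⟩

lemma norm_profile (p : S × ℝ) : ‖profile p‖ = √(‖p.1‖ ^ 2 + p.2 ^ 2) :=
  norm_mk _ _

lemma profile_ne_zero {p : S × ℝ} (hp : p ≠ 0) : profile p ≠ 0 := by
  intro h
  have hs : ‖p.1‖ = 0 := congrArg Complex.re h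
  have ht : p.2 = 0 := congrArg Complex.im h
  exact hp (Prod.ext (norm_eq_zero.mp hs) ht)

lemma profile_add_profile (v w : S × ℝ) :
    profile v + profile w = ⟨‖v.1‖ + ‖w.1‖, v.2 + w.2⟩ :=
  rfl

lemma norm_profile_add_le (v w : S × ℝ) : ‖profile (v + w)‖ ≤ ‖profile v + profile w‖ := by
  rw [profile_add_profile, norm_profile, norm_mk]
  refine Real.sqrt_le_sqrt ?_
  have := norm_add_le v.1 w.1
  simp only [Prod.fst_add, Prod.snd_add]
  nlinarith [norm_nonneg (v.1 + w.1)]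

lemma norm_add_eq_of_norm_profile_add_eq {v w : S × ℝ}
    (h : ‖profile (v + w)‖ = ‖profile v + profile w‖) : ‖v.1 + w.1‖ = ‖v.1‖ + ‖w.1‖ := by
  rw [profile_add_profile, norm_profile, norm_mk,
    Real.sqrt_inj (by positivity) (by positivity)] at h
  simp only [Prod.fst_add, Prod.snd_add] at h
  have hsq : ‖v.1 + w.1‖ ^ 2 = (‖v.1‖ + ‖w.1‖) ^ 2 := by linarith
  exact (pow_left_inj₀ (norm_nonneg _) (by positivity) two_ne_zero).mp hsq

variable [NormedSpace ℝ S]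

lemma eq_smul_of_norm_add_eq
    (hS : ∀ x y : S, x ≠ 0 → y ≠ 0 → ‖x + y‖ = ‖x‖ + ‖y‖ → ∃ μ : ℝ, 0 < μ ∧ y = μ • x)
    {s₁ s₂ : S} {μ : ℝ} (hμ : 0 < μ)
    (hadd : ‖s₁ + s₂‖ = ‖s₁‖ + ‖s₂‖) (hnorm : ‖s₂‖ = μ * ‖s₁‖) : s₂ = μ • s₁ := by
  rcases eq_or_ne s₁ 0 with rfl | hs₁
  · simpa using hnorm
  have hs₁' : 0 < ‖s₁‖ := norm_pos_iff.mpr hs₁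
  have hs₂ : s₂ ≠ 0 := norm_ne_zero_iff.mp (by rw [hnorm]; positivity)
  obtain ⟨ν, hν, rfl⟩ := hS s₁ s₂ hs₁ hs₂ hadd
  rw [norm_smul, Real.norm_of_nonneg hν.le] at hnorm
  rw [mul_right_cancel₀ hs₁'.ne' hnorm]

lemma eq_smul_of_profile_eq_smul
    (hS : ∀ x y : S, x ≠ 0 → y ≠ 0 → ‖x + y‖ = ‖x‖ + ‖y‖ → ∃ μ : ℝ, 0 < μ ∧ y = μ • x)
    {v w : S × ℝ} {μ : ℝ} (hμ : 0 < μ)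
    (hadd : ‖v.1 + w.1‖ = ‖v.1‖ + ‖w.1‖) (h : profile w = μ • profile v) : w = μ • v := by
  have hnorm : ‖w.1‖ = μ * ‖v.1‖ := by simpa [profile] using congrArg Complex.re h
  have ht : w.2 = μ * v.2 := by simpa [profile] using congrArg Complex.im h
  exact Prod.ext (eq_smul_of_norm_add_eq hS hμ hadd hnorm) ht

end ProdSqrtNorm

open ProdSqrtNorm in
/-- If `S` is a strictly convex real normed space, then `V = S × ℝ` with the norm
`N(s,t) = √(‖s‖² + t²)` is strictly convex: whenever `N(v+w) = N(v) + N(w)` for nonzero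
`v, w`, there is a real `μ > 0` with `w = μ•v`. -/
theorem stmt_13 {S : Type*} [NormedAddCommGroup S] [NormedSpace ℝ S]
    (hS : ∀ x y : S, x ≠ 0 → y ≠ 0 → ‖x + y‖ = ‖x‖ + ‖y‖ →
      ∃ μ : ℝ, 0 < μ ∧ y = μ • x)
    (N : S × ℝ → ℝ) (hN : ∀ p : S × ℝ, N p = Real.sqrt (‖p.1‖ ^ 2 + p.2 ^ 2)) :
    ∀ v w : S × ℝ, v ≠ 0 → w ≠ 0 → N (v + w) = N v + N w →
      ∃ μ : ℝ, 0 < μ ∧ w = μ • v := by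
  intro v w hv hw heq
  simp only [hN, ← norm_profile] at heq
  have hS_le := norm_profile_add_le v w
  have hℂ_le := norm_add_le (profile v) (profile w)
  have hray : SameRay ℝ (profile v) (profile w) := sameRay_iff_norm_add.mpr (by linarith)
  obtain ⟨μ, hμ, hμvw⟩ := hray.exists_pos_left (profile_ne_zero hv) (profile_ne_zero hw)
  have hadd := norm_add_eq_of_norm_profile_add_eq (by linarith : ‖profile (v + w)‖ = _)
  exact ⟨μ, hμ, eq_smul_of_profile_eq_smul hS hμ hadd hμvw.symm⟩
end

section
/- Fix a real number α with 0 < α < 1 and define g : ℝ² → ℝ by g(x₁, x₂) := √( max(|x₁|, |x₂|)² − α²x₂² ). Then g(x) > 0 for every x ≠ 0 and g(λx) = |λ| g(x) for all real λ, but g is not subadditive: g((2,0)) = 2 > 2√(1 − α²) = g((1,1)) + g((1,−1)). Consequently the Cauchy–Schwarz inequality fails on this positive subspace: the Minkowski product of a generalized Minkowski space need not satisfy the Cauchy–Schwarz inequality on its positive subspaces. -/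
/-! The square-root function `x ↦ √(‖x‖² - ℓ(x)²)` of a sup-norm plane with a linear functional
`ℓ` of norm `< 1` subtracted is positive and absolutely homogeneous, like a norm. For
`ℓ = α • snd` the vectors `(1, 1)` and `(1, -1)` both have value `√(1 - α²) < 1`, while their sum
`(2, 0)` has value `2`, so the triangle inequality fails. -/

open Real

section MinkowskiSqrt

variable {E : Type*} [SeminormedAddCommGroup E] [NormedSpace ℝ E]

/-- The Minkowski square-root function of `E × ℝ` (with `ℝ` the negative part) read on the graph
`{(x, ℓ x)}`, parametrized by `x`; for `E = ℝ × ℝ` with the sup norm and `ℓ = α • snd` this is `g`. -/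
noncomputable def minkowskiSqrt (ℓ : E →L[ℝ] ℝ) (x : E) : ℝ := √(‖x‖ ^ 2 - ℓ x ^ 2)

theorem minkowskiSqrt_smul (ℓ : E →L[ℝ] ℝ) (c : ℝ) (x : E) :
    minkowskiSqrt ℓ (c • x) = |c| * minkowskiSqrt ℓ x := by
  have hsq : ‖c • x‖ ^ 2 - ℓ (c • x) ^ 2 = c ^ 2 * (‖x‖ ^ 2 - ℓ x ^ 2) := by
    rw [norm_smul, map_smul, smul_eq_mul, Real.norm_eq_abs, mul_pow, sq_abs]
    ring
  rw [minkowskiSqrt, minkowskiSqrt, hsq, sqrt_mul (sq_nonneg c), sqrt_sq_eq_abs]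

end MinkowskiSqrt

theorem minkowskiSqrt_pos {E : Type*} [NormedAddCommGroup E] [NormedSpace ℝ E]
    {ℓ : E →L[ℝ] ℝ} (hℓ : ‖ℓ‖ < 1) {x : E} (hx : x ≠ 0) : 0 < minkowskiSqrt ℓ x := by
  have hx₀ : 0 < ‖x‖ := norm_pos_iff.mpr hx
  have hℓx : |ℓ x| < ‖x‖ :=
    calc |ℓ x| = ‖ℓ x‖ := (Real.norm_eq_abs _).symm
      _ ≤ ‖ℓ‖ * ‖x‖ := ℓ.le_opNorm x
      _ < 1 * ‖x‖ := by gcongr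
      _ = ‖x‖ := one_mul _
  rw [minkowskiSqrt, sqrt_pos, sub_pos, ← sq_abs (ℓ x)]
  gcongr

theorem norm_smul_snd_lt_one {α : ℝ} (hα0 : 0 < α) (hα1 : α < 1) :
    ‖α • ContinuousLinearMap.snd ℝ ℝ ℝ‖ < 1 :=
  calc ‖α • ContinuousLinearMap.snd ℝ ℝ ℝ‖ ≤ ‖α‖ * ‖ContinuousLinearMap.snd ℝ ℝ ℝ‖ := ContinuousLinearMap.opNorm_smul_le _ _
    _ ≤ α * 1 := by
      rw [Real.norm_of_nonneg hα0.le]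
      gcongr
      exact ContinuousLinearMap.norm_snd_le ℝ ℝ ℝ
    _ < 1 := by linarith

theorem sqrt_one_sub_sq_lt_one {α : ℝ} (hα0 : 0 < α) : √(1 - α ^ 2) < 1 := by
  rw [sqrt_lt' one_pos]
  nlinarith

/-- For `0 < α < 1`, the function `g(x₁,x₂) = √(max(|x₁|,|x₂|)² - α²x₂²)` (the square-root
function of a Minkowski product restricted to a positive subspace of a generalized
Minkowski space) is positive on nonzero vectors and absolutely homogeneous, yet it fails
subadditivity: `g(2,0) = 2 > 2√(1-α²) = g(1,1) + g(1,-1)`. Hence the Cauchy–Schwarz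
inequality fails on this positive subspace. -/
theorem stmt_15 (α : ℝ) (hα0 : 0 < α) (hα1 : α < 1)
    (g : ℝ × ℝ → ℝ)
    (hg : ∀ x : ℝ × ℝ, g x = Real.sqrt (max |x.1| |x.2| ^ 2 - α ^ 2 * x.2 ^ 2)) :
    (∀ x : ℝ × ℝ, x ≠ 0 → 0 < g x) ∧
    (∀ (c : ℝ) (x : ℝ × ℝ), g (c • x) = |c| * g x) ∧
    g (2, 0) = 2 ∧
    g (1, 1) + g (1, -1) = 2 * Real.sqrt (1 - α ^ 2) ∧
    2 * Real.sqrt (1 - α ^ 2) < 2 ∧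
    ¬ (∀ x y : ℝ × ℝ, g (x + y) ≤ g x + g y) := by
  have hg_eq : g = minkowskiSqrt (α • ContinuousLinearMap.snd ℝ ℝ ℝ) := by
    ext x
    rw [hg, minkowskiSqrt, Prod.norm_def, Real.norm_eq_abs, Real.norm_eq_abs]
    simp only [smul_apply, ContinuousLinearMap.coe_snd', smul_eq_mul, mul_pow]
  have h20 : g (2, 0) = 2 := by rw [hg]; norm_num
  have h11 : g (1, 1) = √(1 - α ^ 2) := by rw [hg]; norm_num
  have h1m1 : g (1, -1) = √(1 - α ^ 2) := by rw [hg]; norm_num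
  have hlt : 2 * √(1 - α ^ 2) < 2 := by linarith [sqrt_one_sub_sq_lt_one hα0]
  refine ⟨fun x hx => hg_eq ▸ minkowskiSqrt_pos (norm_smul_snd_lt_one hα0 hα1) hx,
    fun c x => hg_eq ▸ minkowskiSqrt_smul _ c x, h20, by rw [h11, h1m1]; ring, hlt, ?_⟩
  intro hsub
  have := hsub (1, 1) (1, -1)
  rw [h11, h1m1, Prod.mk_add_mk, show ((1 : ℝ) + 1, (1 : ℝ) + -1) = (2, 0) by norm_num, h20] at this
  linarith
end

section
/- Define a product on ℝ² by [u₁, u₂] := (x₁x₂ + 2y₁y₂) · (x₂² + y₂²)/(x₂² + 2y₂²) for u₂ = (x₂,y₂) ≠ 0 (and [u₁, 0] := 0), where uᵢ = (xᵢ, yᵢ). Then this product is linear in its first argument, homogeneous in its second argument ([u₁, λu₂] = λ[u₁,u₂] for real λ), and satisfies [u,u] = x² + y² = ‖u‖² for the Euclidean norm; nevertheless the Cauchy–Schwarz inequality fails for it: [(1,2),(1,1)] = 10/3 > √10 = √([(1,2),(1,2)]) · √([(1,1),(1,1)]). -/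
/-!
The factor `(x₂² + y₂²)/(x₂² + 2y₂²)` is invariant under scaling `u₂`, so the product inherits
linearity in `u₁` and homogeneity in `u₂` from the bilinear form `x₁x₂ + 2y₁y₂`; on the diagonal
the factor cancels this form down to `x² + y²`. Cauchy–Schwarz fails since the product is not
symmetric: `[(1,2),(1,1)] = 5 · 2/3`, while `[(1,2),(1,2)] · [(1,1),(1,1)] = 5 · 2`.
-/

namespace SkewProduct

noncomputable def weight (v : ℝ × ℝ) : ℝ := (v.1 ^ 2 + v.2 ^ 2) / (v.1 ^ 2 + 2 * v.2 ^ 2)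

/-- At `v = 0` the weight is `0 / 0 = 0`, so this agrees with the convention `[u, 0] = 0`. -/
noncomputable def product (u v : ℝ × ℝ) : ℝ := (u.1 * v.1 + 2 * u.2 * v.2) * weight v

lemma weight_smul {c : ℝ} (hc : c ≠ 0) (v : ℝ × ℝ) : weight (c • v) = weight v := by
  simp only [weight, Prod.smul_fst, Prod.smul_snd, smul_eq_mul]
  rw [show (c * v.1) ^ 2 + (c * v.2) ^ 2 = c ^ 2 * (v.1 ^ 2 + v.2 ^ 2) by ring,
    show (c * v.1) ^ 2 + 2 * (c * v.2) ^ 2 = c ^ 2 * (v.1 ^ 2 + 2 * v.2 ^ 2) by ring,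
    mul_div_mul_left _ _ (pow_ne_zero 2 hc)]

lemma product_add_left (u u' v : ℝ × ℝ) : product (u + u') v = product u v + product u' v := by
  simp only [product, Prod.fst_add, Prod.snd_add]
  ring

lemma product_smul_left (c : ℝ) (u v : ℝ × ℝ) : product (c • u) v = c * product u v := by
  simp only [product, Prod.smul_fst, Prod.smul_snd, smul_eq_mul]
  ring

lemma product_smul_right (c : ℝ) (u v : ℝ × ℝ) : product u (c • v) = c * product u v := by
  rcases eq_or_ne c 0 with rfl | hc
  · simp [product]
  · rw [product, weight_smul hc, product]
    simp only [Prod.smul_fst, Prod.smul_snd, smul_eq_mul]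
    ring

lemma product_self (u : ℝ × ℝ) : product u u = u.1 ^ 2 + u.2 ^ 2 := by
  rw [product, weight]
  rcases eq_or_ne (u.1 ^ 2 + 2 * u.2 ^ 2) 0 with h | h
  · have hx : u.1 = 0 := by nlinarith [sq_nonneg u.1, sq_nonneg u.2]
    have hy : u.2 = 0 := by nlinarith [sq_nonneg u.1, sq_nonneg u.2]
    simp [hx, hy]
  · rw [show u.1 * u.1 + 2 * u.2 * u.2 = u.1 ^ 2 + 2 * u.2 ^ 2 by ring, mul_div_cancel₀ _ h]

end SkewProduct

/-- The product `[u₁,u₂] = (x₁x₂ + 2y₁y₂)·(x₂² + y₂²)/(x₂² + 2y₂²)` on `ℝ²` is linear in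
its first argument, homogeneous in its second argument, and associated to the Euclidean
norm (`[u,u] = ‖u‖²`); nevertheless the Cauchy–Schwarz inequality fails for it:
`[(1,2),(1,1)] = 10/3 > √10 = √[(1,2),(1,2)]·√[(1,1),(1,1)]`. -/
theorem stmt_16 (p : ℝ × ℝ → ℝ × ℝ → ℝ)
    (hp : ∀ u v : ℝ × ℝ, v ≠ 0 →
      p u v = (u.1 * v.1 + 2 * u.2 * v.2) * ((v.1 ^ 2 + v.2 ^ 2) / (v.1 ^ 2 + 2 * v.2 ^ 2)))
    (hp0 : ∀ u : ℝ × ℝ, p u 0 = 0) :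
    (∀ u u' v : ℝ × ℝ, p (u + u') v = p u v + p u' v) ∧
    (∀ (c : ℝ) (u v : ℝ × ℝ), p (c • u) v = c * p u v) ∧
    (∀ (c : ℝ) (u v : ℝ × ℝ), p u (c • v) = c * p u v) ∧
    (∀ u : ℝ × ℝ, p u u = u.1 ^ 2 + u.2 ^ 2) ∧
    p (1, 2) (1, 1) = 10 / 3 ∧
    Real.sqrt (p (1, 2) (1, 2)) * Real.sqrt (p (1, 1) (1, 1)) = Real.sqrt 10 ∧
    Real.sqrt 10 < 10 / 3 := by
  have hp_eq : p = SkewProduct.product := by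
    ext u v
    rcases eq_or_ne v 0 with rfl | hv
    · simp [hp0, SkewProduct.product]
    · exact hp u v hv
  subst hp_eq
  refine ⟨SkewProduct.product_add_left, SkewProduct.product_smul_left,
    SkewProduct.product_smul_right, SkewProduct.product_self, ?_, ?_, ?_⟩
  · norm_num [SkewProduct.product, SkewProduct.weight]
  · rw [SkewProduct.product_self, SkewProduct.product_self, ← Real.sqrt_mul (by norm_num)]
    norm_num
  · rw [Real.sqrt_lt' (by norm_num)]
    norm_num
end

section
/- Let V be a complex normed space and let [·,·] be an s.i.p. on V with [x,x] = ‖x‖² that is additive in its second argument ([x, y+z] = [x,y] + [x,z] for all x,y,z). Assume the s.i.p. representation of the norm is unique: every map [·,·]' : V × V → ℂ satisfying the s.i.p. axioms (s1)–(s5) with [x,x]' = ‖x‖² for all x equals [·,·]. Then [x,y] = conjugate([y,x]) for all x, y ∈ V; hence [·,·] is an inner product and V is an inner product space. -/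
/-!
If `[·,·]` is additive in its second argument, its conjugate transpose `(x, y) ↦ conj [y,x]`
satisfies the same s.i.p. axioms and also represents the norm, so uniqueness forces
`[x,y] = conj [y,x]`. Biadditivity alone then gives the parallelogram law by expanding
`[x ± y, x ± y]`.
-/

open ComplexConjugate

section

variable {V : Type*} [NormedAddCommGroup V] [NormedSpace ℂ V]

/-- Axioms (s1), (s2), (s4), (s5) and `[x,x] = ‖x‖²`; (s3) follows from `inner_self`. -/
structure IsNormSIP (ip : V → V → ℂ) : Prop where
  add_left : ∀ x y z, ip (x + y) z = ip x z + ip y z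
  smul_left : ∀ (c : ℂ) x y, ip (c • x) y = c * ip x y
  norm_sq_le : ∀ x y, ‖ip x y‖ ^ 2 ≤ (ip x x).re * (ip y y).re
  smul_right : ∀ (c : ℂ) x y, ip x (c • y) = conj c * ip x y
  inner_self : ∀ x, ip x x = (‖x‖ ^ 2 : ℂ)

namespace IsNormSIP

variable {ip : V → V → ℂ}

theorem re_inner_self_pos_and_im_eq_zero (h : IsNormSIP ip) {x : V} (hx : x ≠ 0) :
    0 < (ip x x).re ∧ (ip x x).im = 0 := by
  rw [h.inner_self]
  norm_cast
  exact ⟨by positivity, rfl⟩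

theorem conj_swap (h : IsNormSIP ip) (add_right : ∀ x y z, ip x (y + z) = ip x y + ip x z) :
    IsNormSIP fun x y => conj (ip y x) where
  add_left x y z := by simp [add_right]
  smul_left c x y := by simp [h.smul_right]
  norm_sq_le x y := by simpa [mul_comm] using h.norm_sq_le y x
  smul_right c x y := by simp [h.smul_left]
  inner_self x := by simp [h.inner_self]

end IsNormSIP

theorem norm_add_sq_add_norm_sub_sq_of_biadditive {E : Type*} [SeminormedAddCommGroup E]
    (ip : E → E → ℂ) (add_left : ∀ x y z, ip (x + y) z = ip x z + ip y z)
    (add_right : ∀ x y z, ip x (y + z) = ip x y + ip x z)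
    (inner_self : ∀ x, ip x x = (‖x‖ ^ 2 : ℂ)) (x y : E) :
    ‖x + y‖ ^ 2 + ‖x - y‖ ^ 2 = 2 * ‖x‖ ^ 2 + 2 * ‖y‖ ^ 2 := by
  let B : E →+ E →+ ℂ := AddMonoidHom.mk' (fun x => AddMonoidHom.mk' (ip x) (add_right x))
    fun x y => by ext z; exact add_left x y z
  have hB : ∀ x, B x x = (‖x‖ ^ 2 : ℂ) := inner_self
  have key : B (x + y) (x + y) + B (x - y) (x - y) = 2 * B x x + 2 * B y y := by
    simp only [map_add, map_sub, AddMonoidHom.add_apply, AddMonoidHom.sub_apply]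
    ring
  simp only [hB] at key
  exact_mod_cast key

end

theorem stmt_17_general {V : Type*} [NormedAddCommGroup V] [NormedSpace ℂ V]
    (ip : V → V → ℂ)
    (h_add : ∀ x y z : V, ip (x + y) z = ip x z + ip y z)
    (h_sm1 : ∀ (c : ℂ) (x y : V), ip (c • x) y = c * ip x y)
    (h_cs : ∀ x y : V, ‖ip x y‖ ^ 2 ≤ (ip x x).re * (ip y y).re)
    (h_sm2 : ∀ (c : ℂ) (x y : V), ip x (c • y) = (starRingEnd ℂ) c * ip x y)
    (h_norm : ∀ x : V, ip x x = (‖x‖ ^ 2 : ℂ))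
    (h_add2 : ∀ x y z : V, ip x (y + z) = ip x y + ip x z)
    (h_unique : ∀ ip' : V → V → ℂ,
      (∀ x y z : V, ip' (x + y) z = ip' x z + ip' y z) →
      (∀ (c : ℂ) (x y : V), ip' (c • x) y = c * ip' x y) →
      (∀ x : V, x ≠ 0 → 0 < (ip' x x).re ∧ (ip' x x).im = 0) →
      (∀ x y : V, ‖ip' x y‖ ^ 2 ≤ (ip' x x).re * (ip' y y).re) →
      (∀ (c : ℂ) (x y : V), ip' x (c • y) = (starRingEnd ℂ) c * ip' x y) →
      (∀ x : V, ip' x x = (‖x‖ ^ 2 : ℂ)) → ip' = ip) :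
    (∀ x y : V, ip x y = (starRingEnd ℂ) (ip y x)) ∧
    (∀ x y : V, ‖x + y‖ ^ 2 + ‖x - y‖ ^ 2 = 2 * ‖x‖ ^ 2 + 2 * ‖y‖ ^ 2) := by
  have hswap := (IsNormSIP.mk h_add h_sm1 h_cs h_sm2 h_norm).conj_swap h_add2
  have hsym : (fun x y => conj (ip y x)) = ip :=
    h_unique _ hswap.add_left hswap.smul_left (fun _ => hswap.re_inner_self_pos_and_im_eq_zero)
      hswap.norm_sq_le hswap.smul_right hswap.inner_self
  exact ⟨fun x y => (congrFun₂ hsym x y).symm,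
    norm_add_sq_add_norm_sub_sq_of_biadditive ip h_add h_add2 h_norm⟩

/-- If a complex normed space `V` carries an s.i.p. `ip` representing the norm
(`[x,x] = ‖x‖²`) which is additive in its second argument, and if the s.i.p.
representation of the norm is unique, then `ip` is conjugate-symmetric; hence it is an
inner product and the norm satisfies the parallelogram law, so `V` is an inner product
space. -/
theorem stmt_17 {V : Type*} [NormedAddCommGroup V] [NormedSpace ℂ V]
    (ip : V → V → ℂ)
    (h_add : ∀ x y z : V, ip (x + y) z = ip x z + ip y z)
    (h_sm1 : ∀ (c : ℂ) (x y : V), ip (c • x) y = c * ip x y)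
    (h_pos : ∀ x : V, x ≠ 0 → 0 < (ip x x).re ∧ (ip x x).im = 0)
    (h_cs : ∀ x y : V, ‖ip x y‖ ^ 2 ≤ (ip x x).re * (ip y y).re)
    (h_sm2 : ∀ (c : ℂ) (x y : V), ip x (c • y) = (starRingEnd ℂ) c * ip x y)
    (h_norm : ∀ x : V, ip x x = (‖x‖ ^ 2 : ℂ))
    (h_add2 : ∀ x y z : V, ip x (y + z) = ip x y + ip x z)
    (h_unique : ∀ ip' : V → V → ℂ,
      (∀ x y z : V, ip' (x + y) z = ip' x z + ip' y z) →
      (∀ (c : ℂ) (x y : V), ip' (c • x) y = c * ip' x y) →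
      (∀ x : V, x ≠ 0 → 0 < (ip' x x).re ∧ (ip' x x).im = 0) →
      (∀ x y : V, ‖ip' x y‖ ^ 2 ≤ (ip' x x).re * (ip' y y).re) →
      (∀ (c : ℂ) (x y : V), ip' x (c • y) = (starRingEnd ℂ) c * ip' x y) →
      (∀ x : V, ip' x x = (‖x‖ ^ 2 : ℂ)) → ip' = ip) :
    (∀ x y : V, ip x y = (starRingEnd ℂ) (ip y x)) ∧
    (∀ x y : V, ‖x + y‖ ^ 2 + ‖x - y‖ ^ 2 = 2 * ‖x‖ ^ 2 + 2 * ‖y‖ ^ 2) :=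
  stmt_17_general ip h_add h_sm1 h_cs h_sm2 h_norm h_add2 h_unique
end

section
/- Let S be a real vector space with a real s.i.p. [·,·] and associated norm ‖x‖ = √([x,x]). Then the normed space (S, ‖·‖) is strictly convex if and only if the following equality condition holds: whenever [x,y] = ‖x‖·‖y‖ for nonzero x, y ∈ S, there exists a real λ > 0 with y = λx. -/
/-!
Write `‖x‖ = √[x,x]`. Cauchy–Schwarz gives `[x,y] ≤ ‖x‖‖y‖`, hence the triangle inequality via
`‖x+y‖² = [x,x+y] + [y,x+y]`. If `[x,y] = ‖x‖‖y‖` with `y ≠ 0`, then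
`‖x+y‖‖y‖ ≥ [x+y,y] = (‖x‖+‖y‖)‖y‖`, so the triangle inequality is an equality. Conversely, if
`‖x+y‖ = ‖x‖+‖y‖`, both Cauchy–Schwarz bounds in `[x,x+y] + [y,x+y] = (‖x‖+‖y‖)‖x+y‖` are
equalities, so `x + y = c x` with `c > 0`; then `‖x+y‖² = [c x, x+y] = c‖x‖‖x+y‖` gives
`c‖x‖ = ‖x‖ + ‖y‖`, so `c > 1` and `y = (c-1) x`.
-/

namespace SemiInnerProduct

variable {S : Type*} {ip : S → S → ℝ}

lemma le_sqrt_mul_sqrt (h_nonneg : ∀ x : S, 0 ≤ ip x x)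
    (h_cs : ∀ x y : S, ip x y ^ 2 ≤ ip x x * ip y y) (x y : S) :
    ip x y ≤ √(ip x x) * √(ip y y) :=
  calc ip x y ≤ √(ip x y ^ 2) := Real.le_sqrt_of_sq_le le_rfl
    _ ≤ √(ip x x * ip y y) := Real.sqrt_le_sqrt (h_cs x y)
    _ = √(ip x x) * √(ip y y) := Real.sqrt_mul (h_nonneg x) _

variable [AddCommGroup S]

lemma zero_left (h_add : ∀ x y z : S, ip (x + y) z = ip x z + ip y z) (y : S) : ip 0 y = 0 := by
  have h := h_add 0 0 y
  rw [add_zero] at h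
  linarith

lemma self_nonneg (h_add : ∀ x y z : S, ip (x + y) z = ip x z + ip y z)
    (h_pos : ∀ x : S, x ≠ 0 → 0 < ip x x) (x : S) : 0 ≤ ip x x := by
  rcases eq_or_ne x 0 with rfl | hx
  · exact (zero_left h_add 0).ge
  · exact (h_pos x hx).le

lemma sqrt_add_le (h_add : ∀ x y z : S, ip (x + y) z = ip x z + ip y z)
    (h_nonneg : ∀ x : S, 0 ≤ ip x x) (h_cs : ∀ x y : S, ip x y ^ 2 ≤ ip x x * ip y y)
    (x y : S) : √(ip (x + y) (x + y)) ≤ √(ip x x) + √(ip y y) := by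
  have hsq := Real.sq_sqrt (h_nonneg (x + y))
  have hx := le_sqrt_mul_sqrt h_nonneg h_cs x (x + y)
  have hy := le_sqrt_mul_sqrt h_nonneg h_cs y (x + y)
  have hsum := h_add x y (x + y)
  nlinarith [Real.sqrt_nonneg (ip (x + y) (x + y)), Real.sqrt_nonneg (ip x x),
    Real.sqrt_nonneg (ip y y)]

lemma sqrt_add_eq_of_eq_sqrt_mul_sqrt (h_add : ∀ x y z : S, ip (x + y) z = ip x z + ip y z)
    (h_pos : ∀ x : S, x ≠ 0 → 0 < ip x x) (h_cs : ∀ x y : S, ip x y ^ 2 ≤ ip x x * ip y y)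
    {x y : S} (hy : y ≠ 0) (h : ip x y = √(ip x x) * √(ip y y)) :
    √(ip (x + y) (x + y)) = √(ip x x) + √(ip y y) := by
  have h_nonneg := self_nonneg h_add h_pos
  refine (sqrt_add_le h_add h_nonneg h_cs x y).antisymm ?_
  have hy_pos : 0 < √(ip y y) := Real.sqrt_pos.mpr (h_pos y hy)
  refine le_of_mul_le_mul_right ?_ hy_pos
  calc (√(ip x x) + √(ip y y)) * √(ip y y) = ip x y + ip y y := by
        rw [add_mul, ← h, Real.mul_self_sqrt (h_nonneg y)]
    _ = ip (x + y) y := (h_add x y y).symm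
    _ ≤ √(ip (x + y) (x + y)) * √(ip y y) := le_sqrt_mul_sqrt h_nonneg h_cs _ _

lemma eq_sqrt_mul_sqrt_of_sqrt_add_eq (h_add : ∀ x y z : S, ip (x + y) z = ip x z + ip y z)
    (h_nonneg : ∀ x : S, 0 ≤ ip x x) (h_cs : ∀ x y : S, ip x y ^ 2 ≤ ip x x * ip y y)
    {x y : S} (h : √(ip (x + y) (x + y)) = √(ip x x) + √(ip y y)) :
    ip x (x + y) = √(ip x x) * √(ip (x + y) (x + y)) := by
  have hsq := Real.mul_self_sqrt (h_nonneg (x + y))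
  have hx := le_sqrt_mul_sqrt h_nonneg h_cs x (x + y)
  have hy := le_sqrt_mul_sqrt h_nonneg h_cs y (x + y)
  have hsum := h_add x y (x + y)
  nth_rewrite 1 [h] at hsq
  linarith

lemma one_lt_of_add_eq_smul [Module ℝ S]
    (h_add : ∀ x y z : S, ip (x + y) z = ip x z + ip y z)
    (h_sm1 : ∀ (c : ℝ) (x y : S), ip (c • x) y = c * ip x y)
    (h_pos : ∀ x : S, x ≠ 0 → 0 < ip x x) (h_cs : ∀ x y : S, ip x y ^ 2 ≤ ip x x * ip y y)
    {x y : S} {c : ℝ} (hx : x ≠ 0) (hy : y ≠ 0)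
    (h : √(ip (x + y) (x + y)) = √(ip x x) + √(ip y y)) (hc : x + y = c • x) : 1 < c := by
  have h_nonneg := self_nonneg h_add h_pos
  have hx_pos : 0 < √(ip x x) := Real.sqrt_pos.mpr (h_pos x hx)
  have hy_pos : 0 < √(ip y y) := Real.sqrt_pos.mpr (h_pos y hy)
  set n := √(ip (x + y) (x + y))
  have hn_pos : 0 < n := h ▸ add_pos hx_pos hy_pos
  have hn : n = c * √(ip x x) := by
    refine mul_right_cancel₀ hn_pos.ne' ?_
    calc n * n = ip (c • x) (x + y) := by rw [Real.mul_self_sqrt (h_nonneg _), ← hc]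
      _ = c * √(ip x x) * n := by
        rw [h_sm1, eq_sqrt_mul_sqrt_of_sqrt_add_eq h_add h_nonneg h_cs h, mul_assoc]
  nlinarith

end SemiInnerProduct

open SemiInnerProduct in
theorem stmt_19_general {S : Type*} [AddCommGroup S] [Module ℝ S]
    (ip : S → S → ℝ)
    (h_add : ∀ x y z : S, ip (x + y) z = ip x z + ip y z)
    (h_sm1 : ∀ (c : ℝ) (x y : S), ip (c • x) y = c * ip x y)
    (h_pos : ∀ x : S, x ≠ 0 → 0 < ip x x)
    (h_cs : ∀ x y : S, ip x y ^ 2 ≤ ip x x * ip y y)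
    (nrm : S → ℝ) (hnrm : ∀ x, nrm x = Real.sqrt (ip x x)) :
    (∀ x y : S, x ≠ 0 → y ≠ 0 → nrm (x + y) = nrm x + nrm y →
      ∃ c : ℝ, 0 < c ∧ y = c • x) ↔
    (∀ x y : S, x ≠ 0 → y ≠ 0 → ip x y = nrm x * nrm y →
      ∃ c : ℝ, 0 < c ∧ y = c • x) := by
  simp only [hnrm]
  have h_nonneg := self_nonneg h_add h_pos
  constructor
  · intro h_strict x y hx hy h
    exact h_strict x y hx hy (sqrt_add_eq_of_eq_sqrt_mul_sqrt h_add h_pos h_cs hy h)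
  · intro h_eq x y hx hy h
    have hxy : x + y ≠ 0 := by
      rintro hxy
      have hx_pos : 0 < √(ip x x) := Real.sqrt_pos.mpr (h_pos x hx)
      rw [hxy, zero_left h_add, Real.sqrt_zero] at h
      linarith [Real.sqrt_nonneg (ip y y)]
    obtain ⟨c, -, hc⟩ :=
      h_eq x (x + y) hx hxy (eq_sqrt_mul_sqrt_of_sqrt_add_eq h_add h_nonneg h_cs h)
    refine ⟨c - 1, sub_pos.mpr (one_lt_of_add_eq_smul h_add h_sm1 h_pos h_cs hx hy h hc), ?_⟩
    rw [sub_smul, one_smul, ← hc, add_sub_cancel_left]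

/-- (Berkson) A real s.i.p. space with norm `nrm x = √[x,x]` is strictly convex (equality
`nrm(x+y) = nrm x + nrm y` for nonzero `x, y` forces `y = λx` with `λ > 0`) if and only if
whenever `[x,y] = nrm x · nrm y` for nonzero `x, y` there exists `λ > 0` with `y = λx`. -/
theorem stmt_19 {S : Type*} [AddCommGroup S] [Module ℝ S]
    (ip : S → S → ℝ)
    (h_add : ∀ x y z : S, ip (x + y) z = ip x z + ip y z)
    (h_sm1 : ∀ (c : ℝ) (x y : S), ip (c • x) y = c * ip x y)
    (h_sm2 : ∀ (c : ℝ) (x y : S), ip x (c • y) = c * ip x y)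
    (h_pos : ∀ x : S, x ≠ 0 → 0 < ip x x)
    (h_cs : ∀ x y : S, ip x y ^ 2 ≤ ip x x * ip y y)
    (nrm : S → ℝ) (hnrm : ∀ x, nrm x = Real.sqrt (ip x x)) :
    (∀ x y : S, x ≠ 0 → y ≠ 0 → nrm (x + y) = nrm x + nrm y →
      ∃ c : ℝ, 0 < c ∧ y = c • x) ↔
    (∀ x y : S, x ≠ 0 → y ≠ 0 → ip x y = nrm x * nrm y →
      ∃ c : ℝ, 0 < c ∧ y = c • x) :=
  stmt_19_general ip h_add h_sm1 h_pos h_cs nrm hnrm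
end
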